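/- arXiv:1510.04335 — 9 statements merged into one kernel-verified Lean document; each statement's English description precedes it below -/
import Mathlib

section
/- Let a = (a_1,…,a_N) with all a_i > 0. Define V_1(a) = [a_1^{-1} 1_{N−1}, −diag(a_2^{-1},…,a_N^{-1})] ∈ ℝ^{(N−1)×N}, V_2(a) = diag(a_2^{-1},…,a_N^{-1}) + a_1^{-1} 1_{N−1} 1_{N−1}^T ∈ ℝ^{(N−1)×(N−1)}, and V_3 = [−1_{N−1}, I_{N−1}] ∈ ℝ^{(N−1)×N}. Then V_2(a) is invertible and L(a) = −V_1(a)^T V_2(a)^{-1} V_3. -/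
open Matrix

/-- `Lmat a = I_N - (∑ i, a i)⁻¹ • 1_N aᵀ`. -/
noncomputable def Lmat {N : ℕ} (a : Fin N → ℝ) : Matrix (Fin N) (Fin N) ℝ :=
  1 - (∑ i, a i)⁻¹ • Matrix.vecMulVec (fun _ => 1) a

/-- `V₁(a) = [a₁⁻¹ 1_{N−1}, −diag(a₂⁻¹,…,a_N⁻¹)] ∈ ℝ^{(N−1)×N}` (here `N = n+1`). -/
noncomputable def V1 {n : ℕ} (a : Fin (n + 1) → ℝ) : Matrix (Fin n) (Fin (n + 1)) ℝ :=
  Matrix.of fun i j => if j = 0 then (a 0)⁻¹ else if j = i.succ then -(a j)⁻¹ else 0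

/-- `V₂(a) = diag(a₂⁻¹,…,a_N⁻¹) + a₁⁻¹ 1_{N−1} 1_{N−1}ᵀ ∈ ℝ^{(N−1)×(N−1)}`. -/
noncomputable def V2 {n : ℕ} (a : Fin (n + 1) → ℝ) : Matrix (Fin n) (Fin n) ℝ :=
  Matrix.diagonal (fun i => (a i.succ)⁻¹) +
    (a 0)⁻¹ • Matrix.vecMulVec (fun _ => 1) (fun _ => 1)

/-- `V₃ = [−1_{N−1}, I_{N−1}] ∈ ℝ^{(N−1)×N}`. -/
def V3 {n : ℕ} : Matrix (Fin n) (Fin (n + 1)) ℝ :=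
  Matrix.of fun i j => if j = 0 then -1 else if j = i.succ then 1 else 0

/-!
With `D = diag(a⁻¹)` one has `V₁ = -V₃ D` and `V₂ = V₃ D V₃ᵀ`, so the claim reads
`L = B (V₃ B)⁻¹ V₃` with `B = D V₃ᵀ`. Both `L` and this product are the projection onto
`aᗮ` along `1_N`: `L` fixes the columns of `B` because `aᵀ D V₃ᵀ = (V₃ 1_N)ᵀ = 0`, and `L`
factors through `V₃` because `ker V₃ = ℝ 1_N ⊆ ker L`. These two facts alone force
`V₃ B` to be invertible (`B` has a left inverse) and determine `L`.
-/

theorem Matrix.isUnit_mul_and_eq_mul_inv_mul {m n α : Type*} [Fintype m] [DecidableEq m]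
    [Fintype n] [CommRing α] {L : Matrix n n α} {B S : Matrix n m α} {K C : Matrix m n α}
    (hLB : L * B = B) (hLSK : L * S * K = L) (hCB : C * B = 1) :
    IsUnit (K * B) ∧ L = B * (K * B)⁻¹ * K := by
  have hLS : L * S * (K * B) = B := by rw [← Matrix.mul_assoc, hLSK, hLB]
  have hdet : IsUnit (K * B).det :=
    isUnit_det_of_left_inverse (B := C * (L * S)) (by rw [Matrix.mul_assoc, hLS, hCB])
  refine ⟨(isUnit_iff_isUnit_det _).mpr hdet, ?_⟩
  calc L = L * S * (K * B) * (K * B)⁻¹ * K := by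
        rw [mul_nonsing_inv_cancel_right _ _ hdet, hLSK]
    _ = B * (K * B)⁻¹ * K := by rw [hLS]

section Lmat

variable {N : ℕ} (a : Fin N → ℝ)

theorem Lmat_mulVec_one (ha : ∑ i, a i ≠ 0) : Lmat a *ᵥ (fun _ => 1) = 0 := by
  ext i
  simp [Lmat, sub_mulVec, smul_mulVec, vecMulVec_mulVec, dotProduct, ha]

theorem Lmat_mul_of_vecMul_eq_zero {m : Type*} [Fintype m] {M : Matrix (Fin N) m ℝ}
    (hM : a ᵥ* M = 0) : Lmat a * M = M := by
  ext i j
  simp [Lmat, Matrix.sub_mul, smul_mul, vecMulVec_mul, hM, vecMulVec_apply]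

end Lmat

/-- `[0; Iₙ]`, the matrix of `x ↦ (0, x)`. -/
def V3RightInv (n : ℕ) : Matrix (Fin (n + 1)) (Fin n) ℝ :=
  (1 : Matrix (Fin (n + 1)) (Fin (n + 1)) ℝ).submatrix id Fin.succ

section V

variable {n : ℕ}

theorem V3_mulVec_one : V3 (n := n) *ᵥ (fun _ => 1) = 0 := by
  ext i
  simp [V3, mulVec, dotProduct, Fin.sum_univ_succ]

theorem V3_mul_V3RightInv : V3 (n := n) * V3RightInv n = 1 := by
  ext i j
  simp [V3, V3RightInv, Matrix.mul_apply, one_apply, eq_comm]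

theorem V3RightInv_mul_V3 :
    V3RightInv n * V3 (n := n) = 1 - vecMulVec (fun _ => 1) (Pi.single 0 1 : Fin (n + 1) → ℝ) := by
  ext p q
  cases p using Fin.cases <;> cases q using Fin.cases <;>
    simp [V3, V3RightInv, Matrix.mul_apply, one_apply, vecMulVec_apply, (Fin.succ_ne_zero _).symm]

theorem transpose_V1 (a : Fin (n + 1) → ℝ) : (V1 a)ᵀ = -(diagonal a⁻¹ * (V3 (n := n))ᵀ) := by
  ext p i
  cases p using Fin.cases with
  | zero => simp [V1, V3]
  | succ k => by_cases h : k = i <;> simp [V1, V3, h]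

theorem V2_eq (a : Fin (n + 1) → ℝ) : V2 a = V3 (n := n) * (diagonal a⁻¹ * (V3 (n := n))ᵀ) := by
  ext i j
  simp [V2, V3, Matrix.mul_apply, Fin.sum_univ_succ, diagonal_apply, vecMulVec_apply,
    (Fin.succ_ne_zero _).symm, add_comm]

theorem Lmat_mul_diagonal_inv_mul_transpose_V3 {a : Fin (n + 1) → ℝ} (ha : ∀ i, a i ≠ 0) :
    Lmat a * (diagonal a⁻¹ * (V3 (n := n))ᵀ) = diagonal a⁻¹ * (V3 (n := n))ᵀ := by
  refine Lmat_mul_of_vecMul_eq_zero a ?_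
  have had : a ᵥ* diagonal a⁻¹ = fun _ => 1 := by
    ext i; simp [vecMul_diagonal, ha i]
  rw [← vecMul_vecMul, had, vecMul_transpose, V3_mulVec_one]

theorem Lmat_mul_V3RightInv_mul_V3 {a : Fin (n + 1) → ℝ} (ha : ∑ i, a i ≠ 0) :
    Lmat a * V3RightInv n * V3 (n := n) = Lmat a := by
  rw [Matrix.mul_assoc, V3RightInv_mul_V3, Matrix.mul_sub, mul_vecMulVec, Lmat_mulVec_one a ha]
  simp

end V

/-- For positive weights `a`, the matrix `V₂(a)` is invertible and
`L(a) = −V₁(a)ᵀ V₂(a)⁻¹ V₃`. -/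
theorem lmat_factorization {n : ℕ} (a : Fin (n + 1) → ℝ) (ha : ∀ i, 0 < a i) :
    IsUnit (V2 a) ∧ Lmat a = -((V1 a)ᵀ * (V2 a)⁻¹ * V3) := by
  have ha₀ : ∀ i, a i ≠ 0 := fun i => (ha i).ne'
  have hsum : ∑ i, a i ≠ 0 := (Finset.sum_pos (fun i _ => ha i) Finset.univ_nonempty).ne'
  have hleft : (V3RightInv n)ᵀ * diagonal a * (diagonal a⁻¹ * (V3 (n := n))ᵀ) = 1 := by
    have hdiag : diagonal a * diagonal a⁻¹ = 1 := by simp [diagonal_mul_diagonal, ha₀]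
    rw [Matrix.mul_assoc, ← Matrix.mul_assoc (diagonal a), hdiag, Matrix.one_mul,
      ← transpose_mul, V3_mul_V3RightInv, transpose_one]
  obtain ⟨hunit, hL⟩ := isUnit_mul_and_eq_mul_inv_mul
    (Lmat_mul_diagonal_inv_mul_transpose_V3 ha₀) (Lmat_mul_V3RightInv_mul_V3 hsum) hleft
  -- In the goal, `* V3` elaborates via `CStarMatrix` multiplication; we close it up to defeq.
  have hV : -((V1 a)ᵀ * (V2 a)⁻¹ * V3 (n := n)) = diagonal a⁻¹ * (V3 (n := n))ᵀ *
      (V3 (n := n) * (diagonal a⁻¹ * (V3 (n := n))ᵀ))⁻¹ * V3 (n := n) := by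
    rw [V2_eq, transpose_V1]
    simp only [Matrix.neg_mul, neg_neg]
  exact ⟨V2_eq a ▸ hunit, hL.trans hV.symm⟩
end

section
/- Let C ∈ ℝ^{p×n} have full row rank, let P ∈ ℝ^{n×n} be nonsingular with ker C P-invariant (P v ∈ ker C for every v ∈ ker C), and let W ∈ ℝ^{n×n} be such that C W C^T is invertible. Then C P W P^T C^T is invertible and P^T C^T (C P W P^T C^T)^{-1} C P = C^T (C W C^T)^{-1} C. -/
/-!
Full row rank gives a right inverse `B` of `C`. Since `P` preserves `ker C`, the map `C P` factors
through `C`: `C P = M C` with `M = C P B`, and `M` is invertible because `P` is. Hence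
`C P W Pᵀ Cᵀ = M (C W Cᵀ) Mᵀ`, and the factors `M` cancel in `Pᵀ Cᵀ (C P W Pᵀ Cᵀ)⁻¹ C P`.
-/

open Matrix

namespace Matrix

variable {l m n K R : Type*} [Fintype m]

theorem exists_mul_eq_one_of_rank_eq_card [Fintype n] [Field K] [DecidableEq m] (C : Matrix m n K)
    (hC : C.rank = Fintype.card m) : ∃ B : Matrix n m K, C * B = 1 := by
  classical
  have hsurj : LinearMap.range C.mulVecLin = ⊤ :=
    Submodule.eq_top_of_finrank_eq (by rw [← Matrix.rank, hC, Module.finrank_fintype_fun_eq_card])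
  obtain ⟨g, hg⟩ := C.mulVecLin.exists_rightInverse_of_surjective hsurj
  exact ⟨LinearMap.toMatrix' g, toLin'.injective <| by
    rw [toLin'_mul, toLin'_one, toLin'_toMatrix']; exact hg⟩

variable [CommRing R]

theorem mul_mul_eq_of_mul_eq_one_of_ker_le [Fintype n] [DecidableEq m] {C : Matrix m n R}
    {B : Matrix n m R} {D : Matrix l n R} (hCB : C * B = 1) (hker : ∀ v, C *ᵥ v = 0 → D *ᵥ v = 0) :
    D * B * C = D := by
  refine ext_iff_mulVec.mpr fun v => ?_
  have hv : C *ᵥ (v - B *ᵥ C *ᵥ v) = 0 := by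
    rw [mulVec_sub, mulVec_mulVec, hCB, one_mulVec, sub_self]
  have hDv := hker _ hv
  rw [mulVec_sub, sub_eq_zero] at hDv
  rw [← mulVec_mulVec, ← mulVec_mulVec, hDv]

theorem isUnit_of_mul_eq_mul_of_mul_eq_one [Fintype n] [DecidableEq m] [DecidableEq n]
    {M : Matrix m m R} {C : Matrix m n R} {B : Matrix n m R} {P : Matrix n n R} (hCB : C * B = 1)
    (hMC : M * C = C * P) (hP : IsUnit P) : IsUnit M := by
  obtain ⟨u, rfl⟩ := hP
  refine (isUnit_iff_isUnit_det M).mpr <|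
    isUnit_det_of_right_inverse (B := C * (↑u⁻¹ : Matrix n n R) * B) ?_
  calc M * (C * (↑u⁻¹ : Matrix n n R) * B) = C * (↑u * ↑u⁻¹ : Matrix n n R) * B := by
        simp only [← Matrix.mul_assoc, hMC]
    _ = 1 := by rw [Units.mul_inv, Matrix.mul_one, hCB]

theorem transpose_mul_inv_mul_of_congruence [DecidableEq m] {M G : Matrix m m R}
    (hM : IsUnit M) (C : Matrix m n R) :
    (M * C)ᵀ * (M * G * Mᵀ)⁻¹ * (M * C) = Cᵀ * G⁻¹ * C := by
  have hMd : IsUnit M.det := (isUnit_iff_isUnit_det M).mp hM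
  have hMTd : IsUnit Mᵀ.det := by rwa [det_transpose]
  simp only [transpose_mul, mul_inv_rev, Matrix.mul_assoc]
  rw [← Matrix.mul_assoc M⁻¹, nonsing_inv_mul M hMd, Matrix.one_mul,
    ← Matrix.mul_assoc Mᵀ, mul_nonsing_inv Mᵀ hMTd, Matrix.one_mul]

end Matrix

/-- If `C ∈ ℝ^{p×n}` has full row rank, `P ∈ ℝ^{n×n}` is nonsingular with
`ker C` `P`-invariant, and `W ∈ ℝ^{n×n}` is such that `C W Cᵀ` is invertible, then
`C P W Pᵀ Cᵀ` is invertible and `Pᵀ Cᵀ (C P W Pᵀ Cᵀ)⁻¹ C P = Cᵀ (C W Cᵀ)⁻¹ C`. -/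
theorem gramian_kernel_invariance {p n : ℕ}
    (C : Matrix (Fin p) (Fin n) ℝ) (P W : Matrix (Fin n) (Fin n) ℝ)
    (hC : C.rank = p)
    (hP : IsUnit P)
    (hinv : ∀ v : Fin n → ℝ, C.mulVec v = 0 → C.mulVec (P.mulVec v) = 0)
    (hW : IsUnit (C * W * Cᵀ)) :
    IsUnit (C * P * W * Pᵀ * Cᵀ) ∧
      Pᵀ * Cᵀ * (C * P * W * Pᵀ * Cᵀ)⁻¹ * C * P = Cᵀ * (C * W * Cᵀ)⁻¹ * C := by
  obtain ⟨B, hCB⟩ := C.exists_mul_eq_one_of_rank_eq_card (hC.trans (Fintype.card_fin p).symm)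
  set M := C * P * B
  have hMC : M * C = C * P :=
    mul_mul_eq_of_mul_eq_one_of_ker_le hCB fun v hv => by rw [← mulVec_mulVec]; exact hinv v hv
  have hM : IsUnit M := isUnit_of_mul_eq_mul_of_mul_eq_one hCB hMC hP
  have hfactor : C * P * W * Pᵀ * Cᵀ = M * (C * W * Cᵀ) * Mᵀ :=
    calc C * P * W * Pᵀ * Cᵀ = C * P * W * (C * P)ᵀ := by
          simp only [transpose_mul, Matrix.mul_assoc]
      _ = M * C * W * (M * C)ᵀ := by rw [hMC]
      _ = M * (C * W * Cᵀ) * Mᵀ := by simp only [transpose_mul, Matrix.mul_assoc]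
  refine ⟨hfactor ▸ (hM.mul hW).mul ((isUnit_transpose M).mpr hM), ?_⟩
  calc Pᵀ * Cᵀ * (C * P * W * Pᵀ * Cᵀ)⁻¹ * C * P
      = (M * C)ᵀ * (M * (C * W * Cᵀ) * Mᵀ)⁻¹ * (M * C) := by
        rw [hMC, ← hfactor, transpose_mul]
        simp only [Matrix.mul_assoc]
    _ = Cᵀ * (C * W * Cᵀ)⁻¹ * C := transpose_mul_inv_mul_of_congruence hM C
end

section
/- Fix t_0 < T < ∞ and assume the output controllability Gramian W(t_0, T) is invertible. Given initial states x_0 = (x_1(t_0),…,x_N(t_0)) ∈ ℝ^{nN}, define the open-loop control u*(t) = −(L(a) ⊗ (B^T e^{A^T(T−t)} C^T W(t_0,T)^{-1} C e^{A(T−t_0)})) x_0. Then: (i) the trajectories x_i(t) = e^{A(t−t_0)} x_i(t_0) + ∫_{t_0}^t e^{A(t−s)} B u_i^*(s) ds satisfy C x_i(T) = C x_j(T) for all i, j; and (ii) for every control u = (u_1,…,u_N) ∈ L²([t_0,T]; ℝ^{mN}) whose trajectories (given by the same variation-of-constants formula) satisfy C x_i(T) = C x_j(T) for all i, j, one has ∫_{t_0}^T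 Σ_{i=1}^N a_i ‖u_i(t)‖² dt ≥ ∫_{t_0}^T Σ_{i=1}^N a_i ‖u_i^*(t)‖² dt. -/
/-!
Write `G(s) = C e^{A(T-s)} B`, so that `C xᵢ(T) = C e^{A(T-t₀)} xᵢ(t₀) + ∫ G uᵢ` and
`W(t₀,T) = ∫ G Gᵀ`. The control is `u*ᵢ = Gᵀ λᵢ` with `λᵢ = -W⁻¹ C e^{A(T-t₀)} zᵢ`, where
`zᵢ = ∑ⱼ L(a)ᵢⱼ xⱼ(t₀)` is the deviation of agent `i` from the `a`-weighted mean of the initial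
states; hence `∫ G u*ᵢ = -C e^{A(T-t₀)} zᵢ` and every output ends at `C e^{A(T-t₀)}` applied to
that mean. If `u` also reaches output consensus, then `v = u - u*` satisfies `∫ G vᵢ = d` for one
`d` and all `i`, so the cross term `∑ aᵢ ∫ u*ᵢ ⬝ vᵢ = (∑ aᵢ λᵢ) ⬝ d` vanishes because
`aᵀ L(a) = 0`, and the weighted energy of `u = u* + v` is that of `u*` plus that of `v`.
-/

open Matrix MeasureTheory

section

attribute [local instance] Matrix.linftyOpNormedRing Matrix.linftyOpNormedAlgebra

theorem Matrix.continuous_exp_sub_smul {ι : Type*} [Fintype ι] [DecidableEq ι]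
    (A : Matrix ι ι ℝ) (T : ℝ) : Continuous fun t : ℝ => NormedSpace.exp ((T - t) • A) :=
  NormedSpace.exp_continuous.comp ((continuous_const.sub continuous_id).smul continuous_const)

end

attribute [local instance] Matrix.normedAddCommGroup Matrix.normedSpace

/-- The output controllability Gramian
`W(t,T) = ∫_t^T C e^{A(T−s)} B Bᵀ e^{Aᵀ(T−s)} Cᵀ ds`. -/
noncomputable def gramianW {n m p : ℕ} (A : Matrix (Fin n) (Fin n) ℝ)
    (B : Matrix (Fin n) (Fin m) ℝ) (C : Matrix (Fin p) (Fin n) ℝ) (t T : ℝ) :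
    Matrix (Fin p) (Fin p) ℝ :=
  ∫ s in t..T, C * NormedSpace.exp ((T - s) • A) * B * Bᵀ *
      NormedSpace.exp ((T - s) • Aᵀ) * Cᵀ

/-- The optimal open-loop control
`u*(t) = −(L(a) ⊗ (Bᵀ e^{Aᵀ(T−t)} Cᵀ W(t₀,T)⁻¹ C e^{A(T−t₀)})) x₀`. -/
noncomputable def ustar {n m p N : ℕ} (A : Matrix (Fin n) (Fin n) ℝ)
    (B : Matrix (Fin n) (Fin m) ℝ) (C : Matrix (Fin p) (Fin n) ℝ)
    (a : Fin N → ℝ) (x₀ : Fin N × Fin n → ℝ) (t₀ T t : ℝ) : Fin N × Fin m → ℝ :=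
  -(Matrix.kroneckerMap (· * ·) (Lmat a)
      (Bᵀ * NormedSpace.exp ((T - t) • Aᵀ) * Cᵀ * (gramianW A B C t₀ T)⁻¹ *
        C * NormedSpace.exp ((T - t₀) • A))).mulVec x₀

/-- The variation-of-constants trajectory of agent `i` under the stacked control `u`:
`xᵢ(t) = e^{A(t−t₀)} xᵢ(t₀) + ∫_{t₀}^t e^{A(t−s)} B uᵢ(s) ds`. -/
noncomputable def traj {n m N : ℕ} (A : Matrix (Fin n) (Fin n) ℝ)
    (B : Matrix (Fin n) (Fin m) ℝ) (u : ℝ → Fin N × Fin m → ℝ)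
    (x₀ : Fin N × Fin n → ℝ) (t₀ : ℝ) (i : Fin N) (t : ℝ) : Fin n → ℝ :=
  (NormedSpace.exp ((t - t₀) • A)).mulVec (fun k => x₀ (i, k)) +
    ∫ s in t₀..t, (NormedSpace.exp ((t - s) • A) * B).mulVec (fun k => u s (i, k))

/- With the entrywise sup norm the topology on matrices is not reducibly the product topology,
so `Integrable` cannot find its `ENormedAddMonoid` instance; take the one of `ι → κ → ℝ`. -/
noncomputable instance {ι κ : Type*} [Fintype ι] [Fintype κ] :
    ENormedAddCommMonoid (Matrix ι κ ℝ) :=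
  inferInstanceAs (ENormedAddCommMonoid (ι → κ → ℝ))

theorem Matrix.kroneckerMap_mul_mulVec_apply {R ι ι' κ κ' : Type*} [CommSemiring R]
    [Fintype ι'] [Fintype κ'] (L : Matrix ι ι' R) (M : Matrix κ κ' R) (x : ι' × κ' → R)
    (i : ι) (k : κ) :
    (kroneckerMap (· * ·) L M *ᵥ x) (i, k) = (M *ᵥ (L * of fun j l => x (j, l)) i) k := by
  simp only [mulVec, dotProduct, Fintype.sum_prod_type, kroneckerMap_apply, mul_apply, of_apply,
    Finset.mul_sum]
  rw [Finset.sum_comm]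
  exact Finset.sum_congr rfl fun j _ => Finset.sum_congr rfl fun l _ => by ring

section MatrixIntegral

variable {ι κ : Type*} [Fintype ι] [Fintype κ]

theorem intervalIntegral.integral_const_mulVec (M : Matrix ι κ ℝ) {f : ℝ → κ → ℝ} {a b : ℝ}
    (hf : IntervalIntegrable f volume a b) :
    ∫ t in a..b, M *ᵥ f t = M *ᵥ ∫ t in a..b, f t :=
  (LinearMap.toContinuousLinearMap M.mulVecLin).intervalIntegral_comp_comm hf

theorem intervalIntegral.integral_mulVec_const {F : ℝ → Matrix ι κ ℝ} {a b : ℝ}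
    (hF : IntervalIntegrable F volume a b) (y : κ → ℝ) :
    ∫ t in a..b, F t *ᵥ y = (∫ t in a..b, F t) *ᵥ y :=
  (LinearMap.toContinuousLinearMap ((mulVecBilin ℝ ℝ).flip y)).intervalIntegral_comp_comm hF

variable {X : Type*} [MeasurableSpace X] {μ : Measure X}

theorem MeasureTheory.IntegrableOn.continuousOn_mulVec_of_subset [TopologicalSpace X]
    [OpensMeasurableSpace X] {G : X → Matrix ι κ ℝ} {v : X → κ → ℝ} {s K : Set X}
    (hv : IntegrableOn v s μ) (hG : ContinuousOn G K) (hK : IsCompact K) (hs : MeasurableSet s)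
    (hsK : s ⊆ K) : IntegrableOn (fun t => G t *ᵥ v t) s μ :=
  Integrable.of_eval fun j => integrable_finsetSum _ fun k _ =>
    IntegrableOn.continuousOn_mul_of_subset ((continuous_apply_apply j k).comp_continuousOn hG)
      (hv.eval k) hK hs hsK

theorem integral_transpose_mulVec_dotProduct {G : X → Matrix ι κ ℝ} {v : X → κ → ℝ}
    (hGv : Integrable (fun t => G t *ᵥ v t) μ) (y : ι → ℝ) :
    ∫ t, (G t)ᵀ *ᵥ y ⬝ᵥ v t ∂μ = y ⬝ᵥ ∫ t, G t *ᵥ v t ∂μ := by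
  simp_rw [mulVec_transpose, ← dotProduct_mulVec]
  exact (LinearMap.toContinuousLinearMap (dotProductBilin ℝ ℝ y)).integral_comp_comm hGv

theorem sum_mul_integral_transpose_mulVec_dotProduct_eq_zero {ι' : Type*} [Fintype ι']
    {a : ι' → ℝ} {y : ι' → ι → ℝ} (hy : ∑ i, a i • y i = 0)
    {G : X → Matrix ι κ ℝ} {v : ι' → X → κ → ℝ}
    (hGv : ∀ i, Integrable (fun t => G t *ᵥ v i t) μ)
    (hd : ∀ i j, ∫ t, G t *ᵥ v i t ∂μ = ∫ t, G t *ᵥ v j t ∂μ) :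
    ∑ i, a i * ∫ t, (G t)ᵀ *ᵥ y i ⬝ᵥ v i t ∂μ = 0 := by
  rcases isEmpty_or_nonempty ι' with _ | ⟨⟨i₀⟩⟩
  · simp
  calc ∑ i, a i * ∫ t, (G t)ᵀ *ᵥ y i ⬝ᵥ v i t ∂μ
      = ∑ i, a i • y i ⬝ᵥ ∫ t, G t *ᵥ v i₀ t ∂μ := by
        refine Finset.sum_congr rfl fun i _ => ?_
        rw [integral_transpose_mulVec_dotProduct (hGv i), hd i i₀, smul_dotProduct, smul_eq_mul]
    _ = 0 := by rw [← sum_dotProduct, hy, zero_dotProduct]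

end MatrixIntegral

theorem Continuous.memLp_restrict_Ioc {E : Type*} [NormedAddCommGroup E] {f : ℝ → E}
    (hf : Continuous f) (q : ENNReal) (a b : ℝ) : MemLp f q (volume.restrict (Set.Ioc a b)) := by
  obtain ⟨c, hc⟩ := (isCompact_Icc (a := a) (b := b)).exists_bound_of_continuousOn hf.continuousOn
  refine (memLp_top_of_bound hf.aestronglyMeasurable c ?_).mono_exponent le_top
  filter_upwards [ae_restrict_mem measurableSet_Ioc] with t ht
  exact hc t (Set.Ioc_subset_Icc_self ht)

section WeightedEnergy

variable {X ι κ : Type*} [MeasurableSpace X] {μ : Measure X} [Fintype ι] [Fintype κ]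

theorem MeasureTheory.MemLp.eval_curry {f : X → ι × κ → ℝ} {q : ENNReal} (hf : MemLp f q μ)
    (i : ι) : MemLp (fun x k => f x (i, k)) q μ :=
  MemLp.of_eval fun k => hf.eval (i, k)

variable (a : ι → ℝ) {w v : X → ι × κ → ℝ}

theorem integral_weighted_sq_add (hw : MemLp w 2 μ) (hv : MemLp v 2 μ) :
    ∫ x, ∑ i, a i * ∑ k, (w + v) x (i, k) ^ 2 ∂μ =
      ∫ x, ∑ i, a i * ∑ k, w x (i, k) ^ 2 ∂μ +
        2 * ∑ i, a i * ∫ x, (fun k => w x (i, k)) ⬝ᵥ (fun k => v x (i, k)) ∂μ +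
          ∫ x, ∑ i, a i * ∑ k, v x (i, k) ^ 2 ∂μ := by
  have hsq {f : X → ι × κ → ℝ} (hf : MemLp f 2 μ) :
      Integrable (fun x => ∑ i, a i * ∑ k, f x (i, k) ^ 2) μ :=
    integrable_finsetSum _ fun i _ =>
      (integrable_finsetSum _ fun k _ => (hf.eval (i, k)).integrable_sq).const_mul (a i)
  have hdot (i : ι) : Integrable (fun x => (fun k => w x (i, k)) ⬝ᵥ (fun k => v x (i, k))) μ :=
    integrable_finsetSum _ fun k _ => (hw.eval (i, k)).integrable_mul (hv.eval (i, k))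
  have hcross : Integrable
      (fun x => 2 * ∑ i, a i * (fun k => w x (i, k)) ⬝ᵥ (fun k => v x (i, k))) μ :=
    (integrable_finsetSum _ fun i _ => (hdot i).const_mul (a i)).const_mul 2
  have hpt (x : X) : ∑ i, a i * ∑ k, (w + v) x (i, k) ^ 2 =
      ∑ i, a i * ∑ k, w x (i, k) ^ 2 +
        2 * ∑ i, a i * (fun k => w x (i, k)) ⬝ᵥ (fun k => v x (i, k)) +
          ∑ i, a i * ∑ k, v x (i, k) ^ 2 := by
    simp only [Pi.add_apply, add_sq, dotProduct, Finset.sum_add_distrib, Finset.mul_sum, mul_add]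
    ring_nf
  simp_rw [hpt]
  rw [integral_add ?_ (hsq hv), integral_add (hsq hw) hcross, integral_const_mul,
    integral_finsetSum _ fun i _ => (hdot i).const_mul (a i)]
  · simp_rw [integral_const_mul]
  · exact (hsq hw).add hcross

theorem integral_weighted_sq_le_add (ha : ∀ i, 0 ≤ a i) (hw : MemLp w 2 μ) (hv : MemLp v 2 μ)
    (horth : ∑ i, a i * ∫ x, (fun k => w x (i, k)) ⬝ᵥ (fun k => v x (i, k)) ∂μ = 0) :
    ∫ x, ∑ i, a i * ∑ k, w x (i, k) ^ 2 ∂μ ≤ ∫ x, ∑ i, a i * ∑ k, (w + v) x (i, k) ^ 2 ∂μ := by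
  rw [integral_weighted_sq_add a hw hv, horth, mul_zero, add_zero, le_add_iff_nonneg_right]
  exact integral_nonneg fun x => Finset.sum_nonneg fun i _ =>
    mul_nonneg (ha i) (Finset.sum_nonneg fun k _ => sq_nonneg _)

end WeightedEnergy

section Lmat

variable {N : ℕ} (a : Fin N → ℝ)

theorem vecMul_Lmat (ha : ∀ i, 0 ≤ a i) : a ᵥ* Lmat a = 0 := by
  by_cases hsum : ∑ i, a i = 0
  · have ha0 : a = 0 := funext fun i =>
      (Finset.sum_eq_zero_iff_of_nonneg fun i _ => ha i).1 hsum i (Finset.mem_univ i)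
    rw [ha0, zero_vecMul]
  · ext j
    simp [Lmat, vecMul_sub, vecMul_smul, vecMul_vecMulVec, dotProduct, hsum]

theorem sub_Lmat_mul_apply {k : Type*} (X : Matrix (Fin N) k ℝ) (i : Fin N) :
    X i - (Lmat a * X) i = (∑ j, a j)⁻¹ • (a ᵥ* X) := by
  have h : 1 - Lmat a = (∑ j, a j)⁻¹ • vecMulVec (fun _ => 1) a := sub_sub_cancel _ _
  calc X i - (Lmat a * X) i = ((1 - Lmat a : Matrix (Fin N) (Fin N) ℝ) * X) i := by
        rw [Matrix.sub_mul, Matrix.one_mul]; rfl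
    _ = (∑ j, a j)⁻¹ • (a ᵥ* X) := by
      ext l
      simp [h, Matrix.smul_mul, vecMulVec_mul, vecMulVec_apply]

end Lmat

section OutputConsensus

variable {n m p N : ℕ} (A : Matrix (Fin n) (Fin n) ℝ) (B : Matrix (Fin n) (Fin m) ℝ)
  (C : Matrix (Fin p) (Fin n) ℝ)

noncomputable def outputKernel (T s : ℝ) : Matrix (Fin p) (Fin m) ℝ :=
  C * NormedSpace.exp ((T - s) • A) * B

theorem continuous_outputKernel (T : ℝ) : Continuous (outputKernel A B C T) :=
  (continuous_const.matrix_mul (continuous_exp_sub_smul A T)).matrix_mul continuous_const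

theorem gramianW_eq_integral_outputKernel_mul_transpose (t T : ℝ) :
    gramianW A B C t T =
      ∫ s in t..T, outputKernel A B C T s * (outputKernel A B C T s)ᵀ := by
  simp only [gramianW, outputKernel, transpose_mul, ← transpose_smul, exp_transpose,
    Matrix.mul_assoc]

theorem integral_outputKernel_mulVec_transpose_mulVec (t T : ℝ) (y : Fin p → ℝ) :
    ∫ s in t..T, outputKernel A B C T s *ᵥ ((outputKernel A B C T s)ᵀ *ᵥ y) =
      gramianW A B C t T *ᵥ y := by
  simp_rw [mulVec_mulVec, gramianW_eq_integral_outputKernel_mul_transpose]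
  exact intervalIntegral.integral_mulVec_const
    (((continuous_outputKernel A B C T).matrix_mul
      (continuous_outputKernel A B C T).matrix_transpose).intervalIntegrable t T) y

theorem integrableOn_outputKernel_mulVec {t₀ T : ℝ} {f : ℝ → Fin m → ℝ}
    (hf : IntegrableOn f (Set.Ioc t₀ T)) :
    IntegrableOn (fun s => outputKernel A B C T s *ᵥ f s) (Set.Ioc t₀ T) :=
  hf.continuousOn_mulVec_of_subset (continuous_outputKernel A B C T).continuousOn isCompact_Icc
    measurableSet_Ioc Set.Ioc_subset_Icc_self

variable {A B C} {u v w : ℝ → Fin N × Fin m → ℝ} {x₀ : Fin N × Fin n → ℝ} {t₀ T : ℝ}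

theorem mulVec_traj (hle : t₀ ≤ T) {i : Fin N}
    (hu : IntegrableOn (fun s k => u s (i, k)) (Set.Ioc t₀ T)) :
    C *ᵥ traj A B u x₀ t₀ i T =
      (C * NormedSpace.exp ((T - t₀) • A)) *ᵥ (fun k => x₀ (i, k)) +
        ∫ s in t₀..T, outputKernel A B C T s *ᵥ fun k => u s (i, k) := by
  have hint : IntervalIntegrable
      (fun s => (NormedSpace.exp ((T - s) • A) * B) *ᵥ fun k => u s (i, k)) volume t₀ T :=
    (intervalIntegrable_iff_integrableOn_Ioc_of_le hle).2 <|
      hu.continuousOn_mulVec_of_subset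
        ((continuous_exp_sub_smul A T).matrix_mul continuous_const).continuousOn isCompact_Icc
        measurableSet_Ioc Set.Ioc_subset_Icc_self
  rw [traj, mulVec_add, mulVec_mulVec, ← intervalIntegral.integral_const_mulVec C hint]
  simp only [outputKernel, mulVec_mulVec, Matrix.mul_assoc]

theorem mulVec_traj_add_sub_mulVec_traj (hle : t₀ ≤ T) {i : Fin N}
    (hw : IntegrableOn (fun s k => w s (i, k)) (Set.Ioc t₀ T))
    (hv : IntegrableOn (fun s k => v s (i, k)) (Set.Ioc t₀ T)) :
    C *ᵥ traj A B (w + v) x₀ t₀ i T - C *ᵥ traj A B w x₀ t₀ i T =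
      ∫ s in t₀..T, outputKernel A B C T s *ᵥ fun k => v s (i, k) := by
  have hint {f : ℝ → Fin m → ℝ} (hf : IntegrableOn f (Set.Ioc t₀ T)) :
      IntervalIntegrable (fun s => outputKernel A B C T s *ᵥ f s) volume t₀ T :=
    (intervalIntegrable_iff_integrableOn_Ioc_of_le hle).2
      (integrableOn_outputKernel_mulVec A B C hf)
  have hwv : IntegrableOn (fun s k => (w + v) s (i, k)) (Set.Ioc t₀ T) := hw.add hv
  rw [mulVec_traj hle hwv, mulVec_traj hle hw, add_sub_add_left_eq_sub,
    ← intervalIntegral.integral_sub (hint hwv) (hint hw)]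
  simp only [Pi.add_apply, ← mulVec_sub]
  congr! 3 with s k
  exact add_sub_cancel_left _ _

variable (a : Fin N → ℝ)

theorem ustar_agent (t : ℝ) (i : Fin N) :
    (fun k => ustar A B C a x₀ t₀ T t (i, k)) =
      (outputKernel A B C T t)ᵀ *ᵥ
        -(((gramianW A B C t₀ T)⁻¹ * (C * NormedSpace.exp ((T - t₀) • A))) *ᵥ
          (Lmat a * of fun j l => x₀ (j, l)) i) := by
  ext k
  rw [ustar, Pi.neg_apply, kroneckerMap_mul_mulVec_apply, mulVec_neg, Pi.neg_apply,
    mulVec_mulVec]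
  simp only [outputKernel, transpose_mul, ← transpose_smul, exp_transpose,
    Matrix.mul_assoc]

theorem continuous_ustar_agent (i : Fin N) :
    Continuous fun t => (fun k => ustar A B C a x₀ t₀ T t (i, k)) := by
  rw [funext fun t => ustar_agent a t i]
  exact (continuous_outputKernel A B C T).matrix_transpose.matrix_mulVec continuous_const

theorem continuous_ustar : Continuous (ustar A B C a x₀ t₀ T) :=
  continuous_pi fun ik => (continuous_apply ik.2).comp (continuous_ustar_agent a ik.1)

theorem integral_outputKernel_mulVec_ustar (hW : IsUnit (gramianW A B C t₀ T)) (i : Fin N) :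
    ∫ s in t₀..T, outputKernel A B C T s *ᵥ (fun k => ustar A B C a x₀ t₀ T s (i, k)) =
      -((C * NormedSpace.exp ((T - t₀) • A)) *ᵥ (Lmat a * of fun j l => x₀ (j, l)) i) := by
  simp_rw [ustar_agent]
  rw [integral_outputKernel_mulVec_transpose_mulVec, mulVec_neg, mulVec_mulVec,
    ← Matrix.mul_assoc, mul_nonsing_inv _ ((isUnit_iff_isUnit_det _).1 hW), Matrix.one_mul]

theorem mulVec_traj_ustar (hle : t₀ ≤ T) (hW : IsUnit (gramianW A B C t₀ T)) (i : Fin N) :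
    C *ᵥ traj A B (ustar A B C a x₀ t₀ T) x₀ t₀ i T =
      (C * NormedSpace.exp ((T - t₀) • A)) *ᵥ
        ((∑ j, a j)⁻¹ • (a ᵥ* of fun j l => x₀ (j, l))) := by
  rw [mulVec_traj hle (continuous_ustar_agent a i).integrableOn_Ioc,
    integral_outputKernel_mulVec_ustar a hW, ← sub_eq_add_neg,
    ← mulVec_sub, ← sub_Lmat_mul_apply a _ i]
  rfl

theorem sum_mul_integral_ustar_dotProduct_eq_zero (hle : t₀ ≤ T)
    (hW : IsUnit (gramianW A B C t₀ T)) (ha : ∀ i, 0 ≤ a i)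
    (hv : ∀ i, IntegrableOn (fun s k => v s (i, k)) (Set.Ioc t₀ T))
    (hcons : ∀ i j, C *ᵥ traj A B (ustar A B C a x₀ t₀ T + v) x₀ t₀ i T =
      C *ᵥ traj A B (ustar A B C a x₀ t₀ T + v) x₀ t₀ j T) :
    ∑ i, a i * ∫ t in Set.Ioc t₀ T,
      (fun k => ustar A B C a x₀ t₀ T t (i, k)) ⬝ᵥ (fun k => v t (i, k)) = 0 := by
  have hreach (i j : Fin N) :
      ∫ s in Set.Ioc t₀ T, outputKernel A B C T s *ᵥ (fun k => v s (i, k)) =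
        ∫ s in Set.Ioc t₀ T, outputKernel A B C T s *ᵥ (fun k => v s (j, k)) := by
    simp only [← intervalIntegral.integral_of_le hle]
    rw [← mulVec_traj_add_sub_mulVec_traj hle (continuous_ustar_agent a i).integrableOn_Ioc (hv i),
      ← mulVec_traj_add_sub_mulVec_traj hle (continuous_ustar_agent a j).integrableOn_Ioc (hv j),
      hcons i j, mulVec_traj_ustar a hle hW, mulVec_traj_ustar a hle hW]
  have hmult : ∑ i, a i • -(((gramianW A B C t₀ T)⁻¹ * (C * NormedSpace.exp ((T - t₀) • A))) *ᵥ
      (Lmat a * of fun j l => x₀ (j, l)) i) = 0 := by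
    simp_rw [smul_neg, ← mulVec_smul, Finset.sum_neg_distrib, ← mulVec_sum, ← vecMul_eq_sum,
      ← vecMul_vecMul, vecMul_Lmat a ha, zero_vecMul, mulVec_zero, neg_zero]
  simp_rw [ustar_agent]
  exact sum_mul_integral_transpose_mulVec_dotProduct_eq_zero hmult
    (fun i => integrableOn_outputKernel_mulVec A B C (hv i)) hreach

end OutputConsensus

theorem optimal_finite_time_output_consensus_general {n m p N : ℕ}
    (A : Matrix (Fin n) (Fin n) ℝ) (B : Matrix (Fin n) (Fin m) ℝ)
    (C : Matrix (Fin p) (Fin n) ℝ)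
    (a : Fin N → ℝ) (ha : ∀ i, 0 < a i)
    (t₀ T : ℝ) (ht : t₀ < T)
    (hW : IsUnit (gramianW A B C t₀ T))
    (x₀ : Fin N × Fin n → ℝ) :
    (∀ i j : Fin N,
      C.mulVec (traj A B (ustar A B C a x₀ t₀ T) x₀ t₀ i T) =
        C.mulVec (traj A B (ustar A B C a x₀ t₀ T) x₀ t₀ j T)) ∧
    ∀ u : ℝ → Fin N × Fin m → ℝ,
      MemLp u 2 (volume.restrict (Set.Ioc t₀ T)) →
      (∀ i j : Fin N,
        C.mulVec (traj A B u x₀ t₀ i T) = C.mulVec (traj A B u x₀ t₀ j T)) →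
      ∫ t in t₀..T, ∑ i, a i * ∑ k, (u t (i, k)) ^ 2 ≥
        ∫ t in t₀..T, ∑ i, a i * ∑ k, (ustar A B C a x₀ t₀ T t (i, k)) ^ 2 := by
  have hle := ht.le
  have hstar : MemLp (ustar A B C a x₀ t₀ T) 2 (volume.restrict (Set.Ioc t₀ T)) :=
    (continuous_ustar a).memLp_restrict_Ioc 2 t₀ T
  refine ⟨fun i j => by rw [mulVec_traj_ustar a hle hW, mulVec_traj_ustar a hle hW],
    fun u hu hcons => ?_⟩
  obtain ⟨v, rfl⟩ : ∃ v, u = ustar A B C a x₀ t₀ T + v :=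
    ⟨u - ustar A B C a x₀ t₀ T, (add_sub_cancel _ _).symm⟩
  have hv : MemLp v 2 (volume.restrict (Set.Ioc t₀ T)) := by simpa using hu.sub hstar
  have horth := sum_mul_integral_ustar_dotProduct_eq_zero a hle hW (fun i => (ha i).le)
    (fun i => (hv.eval_curry i).integrable one_le_two) hcons
  rw [ge_iff_le, intervalIntegral.integral_of_le hle, intervalIntegral.integral_of_le hle]
  exact integral_weighted_sq_le_add a (fun i => (ha i).le) hstar hv horth

/-- If the output controllability Gramian `W(t₀,T)` is invertible, then the
open-loop control `u*` drives all agents to output consensus at time `T`, and among all `L²`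
controls achieving output consensus at time `T` it minimizes the weighted energy
`∫_{t₀}^T ∑ᵢ aᵢ ‖uᵢ(t)‖² dt`. -/
theorem optimal_finite_time_output_consensus {n m p N : ℕ}
    (A : Matrix (Fin n) (Fin n) ℝ) (B : Matrix (Fin n) (Fin m) ℝ)
    (C : Matrix (Fin p) (Fin n) ℝ) (hC : C.rank = p)
    (a : Fin N → ℝ) (ha : ∀ i, 0 < a i)
    (t₀ T : ℝ) (ht : t₀ < T)
    (hW : IsUnit (gramianW A B C t₀ T))
    (x₀ : Fin N × Fin n → ℝ) :
    (∀ i j : Fin N,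
      C.mulVec (traj A B (ustar A B C a x₀ t₀ T) x₀ t₀ i T) =
        C.mulVec (traj A B (ustar A B C a x₀ t₀ T) x₀ t₀ j T)) ∧
    ∀ u : ℝ → Fin N × Fin m → ℝ,
      MemLp u 2 (volume.restrict (Set.Ioc t₀ T)) →
      (∀ i j : Fin N,
        C.mulVec (traj A B u x₀ t₀ i T) = C.mulVec (traj A B u x₀ t₀ j T)) →
      ∫ t in t₀..T, ∑ i, a i * ∑ k, (u t (i, k)) ^ 2 ≥
        ∫ t in t₀..T, ∑ i, a i * ∑ k, (ustar A B C a x₀ t₀ T t (i, k)) ^ 2 :=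
  optimal_finite_time_output_consensus_general A B C a ha t₀ T ht hW x₀
end

section
/- Fix t_0 < T < ∞ and assume W(t,T) is invertible for every t ∈ [t_0, T). Let u*(t) = −(L(a) ⊗ (B^T e^{A^T(T−t)} C^T W(t_0,T)^{-1} C e^{A(T−t_0)})) x_0 be the optimal open-loop control and let x*(t) = (x_1^*(t),…,x_N^*(t)) be the corresponding trajectory given by x_i^*(t) = e^{A(t−t_0)} x_i(t_0) + ∫_{t_0}^t e^{A(t−s)} B u_i^*(s) ds. Then for every t ∈ [t_0, T), u*(t) = −(L(a) ⊗ (B^T e^{A^T(T−t)} C^T W(t,T)^{-1} C e^{A(T−t)})) x*(t); that is, the optimal open-loop control is realized by the time-varying state feedback u(x,t) = −(L(a) ⊗ B^T e^{A^T(T−t)} C^T W(t,T)^{-1} C e^{A(T−t)}) x. -/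
open Matrix MeasureTheory

attribute [local instance] Matrix.normedAddCommGroup Matrix.normedSpace

/-!
Write the stacked state as `vec X` with `X : Matrix (Fin n) (Fin N) ℝ` (agent `i` in column `i`).
Then `(L ⊗ G) (vec X) = vec (G X Lᵀ)`, so the optimal control steers
`X*(t) = e^{A(t-t₀)} X₀ - Γ(t) P X₀ Lᵀ`, where `P = W(t₀,T)⁻¹ C e^{A(T-t₀)}` and
`Γ(t) = ∫_{t₀}^t e^{A(t-s)} B Bᵀ e^{Aᵀ(T-s)} Cᵀ ds`. Splitting the Gramian integral at `t` gives
`C e^{A(T-t)} Γ(t) = W(t₀,T) - W(t,T)`, and `L` is idempotent, so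
`C e^{A(T-t)} X*(t) Lᵀ = (W(t₀,T) - (W(t₀,T) - W(t,T))) P X₀ Lᵀ = W(t,T) P X₀ Lᵀ`.
The factor `W(t,T)` cancels against the `W(t,T)⁻¹` of the feedback, which leaves the open-loop law.
-/

open scoped Kronecker
open NormedSpace

namespace Matrix

variable {ι : Type*} [Fintype ι] [DecidableEq ι]

theorem exp_smul_mul_exp_smul (A : Matrix ι ι ℝ) (b c : ℝ) :
    exp (b • A) * exp (c • A) = exp ((b + c) • A) := by
  rw [add_smul, exp_add_of_commute _ _ (((Commute.refl A).smul_left b).smul_right c)]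

@[fun_prop]
theorem _root_.Continuous.matrix_exp_smul {f : ℝ → ℝ} (hf : Continuous f) (A : Matrix ι ι ℝ) :
    Continuous fun s => exp (f s • A) := by
  -- `exp` is defined without reference to a norm; any Banach algebra norm on matrices will do.
  let : NormedRing (Matrix ι ι ℝ) := Matrix.linftyOpNormedRing
  let : NormedAlgebra ℝ (Matrix ι ι ℝ) := Matrix.linftyOpNormedAlgebra
  let : NormedAlgebra ℚ (Matrix ι ι ℝ) := NormedAlgebra.restrictScalars ℚ ℝ _
  exact (@exp_continuous _ _ _ (FiniteDimensional.complete ℝ _)).comp (hf.smul continuous_const)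

end Matrix

theorem IsIdempotentElem.matrix_transpose {ι R : Type*} [Fintype ι] [CommSemiring R]
    {M : Matrix ι ι R} (h : IsIdempotentElem M) : IsIdempotentElem Mᵀ := by
  rw [IsIdempotentElem, ← Matrix.transpose_mul, h.eq]

theorem LinearMap.intervalIntegral_comp_comm {E F : Type*} [NormedAddCommGroup E]
    [NormedSpace ℝ E] [FiniteDimensional ℝ E] [NormedAddCommGroup F] [NormedSpace ℝ F]
    [CompleteSpace F] (f : E →ₗ[ℝ] F) {g : ℝ → E} (hg : Continuous g) (a b : ℝ) :
    ∫ s in a..b, f (g s) = f (∫ s in a..b, g s) :=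
  have : CompleteSpace E := FiniteDimensional.complete ℝ E
  f.toContinuousLinearMap.intervalIntegral_comp_comm (hg.intervalIntegrable a b)

namespace Matrix

variable {l m n : Type*} [Fintype l] [Fintype m] [Fintype n]

theorem intervalIntegral_const_mul (X : Matrix l m ℝ) {F : ℝ → Matrix m n ℝ}
    (hF : Continuous F) (a b : ℝ) :
    ∫ s in a..b, X * F s = X * ∫ s in a..b, F s :=
  (mulLeftLinearMap n ℝ X).intervalIntegral_comp_comm hF a b

theorem intervalIntegral_mul_const {F : ℝ → Matrix l m ℝ} (hF : Continuous F)
    (Y : Matrix m n ℝ) (a b : ℝ) :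
    ∫ s in a..b, F s * Y = (∫ s in a..b, F s) * Y :=
  (mulRightLinearMap l ℝ Y).intervalIntegral_comp_comm hF a b

theorem intervalIntegral_col {F : ℝ → Matrix m n ℝ} (hF : Continuous F) (a b : ℝ) (j : n) :
    ∫ s in a..b, (fun i => F s i j) = fun i => (∫ s in a..b, F s) i j :=
  (LinearMap.pi fun i => (LinearMap.proj j).comp (LinearMap.proj i)).intervalIntegral_comp_comm
    hF a b

end Matrix

open Matrix

theorem isIdempotentElem_Lmat {N : ℕ} (a : Fin N → ℝ) : IsIdempotentElem (Lmat a) := by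
  refine IsIdempotentElem.one_sub ?_
  have hsum : a ⬝ᵥ (fun _ => 1) = ∑ i, a i := by simp [dotProduct]
  -- also when `∑ i, a i = 0`, since then `(∑ i, a i)⁻¹ = 0`
  have hc : (∑ i, a i)⁻¹ * (∑ i, a i)⁻¹ * ∑ i, a i = (∑ i, a i)⁻¹ := by
    simpa using mul_self_mul_inv (∑ i, a i)⁻¹
  rw [IsIdempotentElem, smul_mul_smul_comm, vecMulVec_mul_vecMulVec, hsum, vecMulVec_smul,
    smul_smul, hc]

theorem traj_vec {n m N : ℕ} (A : Matrix (Fin n) (Fin n) ℝ) (B : Matrix (Fin n) (Fin m) ℝ)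
    {U : ℝ → Matrix (Fin m) (Fin N) ℝ} (hU : Continuous U) (X₀ : Matrix (Fin n) (Fin N) ℝ)
    (t₀ t : ℝ) :
    (fun ik : Fin N × Fin n => traj A B (fun s => vec (U s)) (vec X₀) t₀ ik.1 t ik.2) =
      vec (exp ((t - t₀) • A) * X₀ + ∫ s in t₀..t, exp ((t - s) • A) * B * U s) := by
  have hcol : ∀ {k : ℕ} (M : Matrix (Fin n) (Fin k) ℝ) (Y : Matrix (Fin k) (Fin N) ℝ) (i : Fin N),
      M *ᵥ (fun l => Y l i) = fun j => (M * Y) j i := by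
    intros; ext; simp [mulVec, dotProduct, mul_apply]
  ext ⟨i, k⟩
  simp only [traj, vec, Pi.add_apply, hcol]
  rw [intervalIntegral_col (by fun_prop)]
  rfl

section OptimalControl

variable {n m p N : ℕ} (A : Matrix (Fin n) (Fin n) ℝ) (B : Matrix (Fin n) (Fin m) ℝ)
  (C : Matrix (Fin p) (Fin n) ℝ)

theorem gramianW_sub_gramianW (t₀ t T : ℝ) :
    gramianW A B C t₀ T - gramianW A B C t T =
      ∫ s in t₀..t, C * exp ((T - s) • A) * B * Bᵀ * exp ((T - s) • Aᵀ) * Cᵀ := by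
  have hK : Continuous fun s : ℝ =>
      C * exp ((T - s) • A) * B * Bᵀ * exp ((T - s) • Aᵀ) * Cᵀ := by
    fun_prop
  rw [gramianW, gramianW, sub_eq_iff_eq_add,
    intervalIntegral.integral_add_adjacent_intervals (hK.intervalIntegrable _ _)
      (hK.intervalIntegrable _ _)]

theorem mul_integral_eq_gramianW_sub (t₀ t T : ℝ) :
    C * exp ((T - t) • A) *
        ∫ s in t₀..t, exp ((t - s) • A) * B * Bᵀ * exp ((T - s) • Aᵀ) * Cᵀ =
      gramianW A B C t₀ T - gramianW A B C t T := by
  rw [gramianW_sub_gramianW, ← intervalIntegral_const_mul _ (by fun_prop)]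
  refine intervalIntegral.integral_congr fun s _ => ?_
  simp only [← Matrix.mul_assoc]
  rw [Matrix.mul_assoc C, exp_smul_mul_exp_smul, sub_add_sub_cancel]

theorem feedback_mul_traj_ustar (X₀ : Matrix (Fin n) (Fin N) ℝ) {t₀ t T : ℝ}
    (hW₀ : IsUnit (gramianW A B C t₀ T)) (hWt : IsUnit (gramianW A B C t T))
    {E : Matrix (Fin N) (Fin N) ℝ} (hE : IsIdempotentElem E) :
    Bᵀ * exp ((T - t) • Aᵀ) * Cᵀ * (gramianW A B C t T)⁻¹ * C * exp ((T - t) • A) *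
        (exp ((t - t₀) • A) * X₀ -
          (∫ s in t₀..t, exp ((t - s) • A) * B * Bᵀ * exp ((T - s) • Aᵀ) * Cᵀ) *
            ((gramianW A B C t₀ T)⁻¹ * C * exp ((T - t₀) • A) * X₀ * E)) * E =
      Bᵀ * exp ((T - t) • Aᵀ) * Cᵀ *
        ((gramianW A B C t₀ T)⁻¹ * C * exp ((T - t₀) • A) * X₀ * E) := by
  set K := Bᵀ * exp ((T - t) • Aᵀ) * Cᵀ
  set Γ := ∫ s in t₀..t, exp ((t - s) • A) * B * Bᵀ * exp ((T - s) • Aᵀ) * Cᵀ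
  set P := (gramianW A B C t₀ T)⁻¹ * C * exp ((T - t₀) • A) with hP
  have hΓ : C * exp ((T - t) • A) * Γ = gramianW A B C t₀ T - gramianW A B C t T :=
    mul_integral_eq_gramianW_sub A B C t₀ t T
  have hΦ : C * exp ((T - t) • A) * exp ((t - t₀) • A) = gramianW A B C t₀ T * P := by
    rw [Matrix.mul_assoc C, exp_smul_mul_exp_smul, sub_add_sub_cancel, hP, ← Matrix.mul_assoc,
      ← Matrix.mul_assoc, mul_nonsing_inv _ ((isUnit_iff_isUnit_det _).mp hW₀), Matrix.one_mul]
  calc _ = K * (gramianW A B C t T)⁻¹ *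
          (C * exp ((T - t) • A) * exp ((t - t₀) • A) * X₀ * E -
            C * exp ((T - t) • A) * Γ * P * X₀ * (E * E)) := by
        simp only [Matrix.mul_assoc, Matrix.mul_sub, Matrix.sub_mul]
    _ = K * (gramianW A B C t T)⁻¹ *
          (gramianW A B C t₀ T * P - (gramianW A B C t₀ T - gramianW A B C t T) * P) * X₀ * E := by
        rw [hE.eq, hΦ, hΓ]
        simp only [Matrix.mul_assoc, Matrix.mul_sub, Matrix.sub_mul]
    _ = K * (P * X₀ * E) := by
        rw [← Matrix.sub_mul, sub_sub_cancel, Matrix.mul_assoc K, ← Matrix.mul_assoc _ _ P,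
          nonsing_inv_mul _ ((isUnit_iff_isUnit_det _).mp hWt), Matrix.one_mul]
        simp only [Matrix.mul_assoc]

variable (a : Fin N → ℝ) (X₀ : Matrix (Fin n) (Fin N) ℝ) (t₀ T : ℝ)

theorem ustar_vec (s : ℝ) :
    ustar A B C a (vec X₀) t₀ T s =
      vec (-(Bᵀ * exp ((T - s) • Aᵀ) * Cᵀ *
        ((gramianW A B C t₀ T)⁻¹ * C * exp ((T - t₀) • A) * X₀ * (Lmat a)ᵀ))) := by
  rw [ustar, kronecker_mulVec_vec, vec_neg]
  simp only [Matrix.mul_assoc]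

theorem traj_ustar_vec (t : ℝ) :
    (fun ik : Fin N × Fin n => traj A B (ustar A B C a (vec X₀) t₀ T) (vec X₀) t₀ ik.1 t ik.2) =
      vec (exp ((t - t₀) • A) * X₀ -
        (∫ s in t₀..t, exp ((t - s) • A) * B * Bᵀ * exp ((T - s) • Aᵀ) * Cᵀ) *
          ((gramianW A B C t₀ T)⁻¹ * C * exp ((T - t₀) • A) * X₀ * (Lmat a)ᵀ)) := by
  rw [funext (ustar_vec A B C a X₀ t₀ T), traj_vec A B (by fun_prop),
    ← intervalIntegral_mul_const (by fun_prop), ← sub_neg_eq_add, ← intervalIntegral.integral_neg]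
  simp only [Matrix.mul_neg, neg_neg, Matrix.mul_assoc]

end OptimalControl

theorem optimal_control_as_state_feedback_general {n m p N : ℕ}
    (A : Matrix (Fin n) (Fin n) ℝ) (B : Matrix (Fin n) (Fin m) ℝ)
    (C : Matrix (Fin p) (Fin n) ℝ)
    (a : Fin N → ℝ)
    (t₀ T : ℝ)
    (hW : ∀ t ∈ Set.Ico t₀ T, IsUnit (gramianW A B C t T))
    (x₀ : Fin N × Fin n → ℝ) :
    ∀ t ∈ Set.Ico t₀ T,
      ustar A B C a x₀ t₀ T t =
        -(Matrix.kroneckerMap (· * ·) (Lmat a)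
            (Bᵀ * NormedSpace.exp ((T - t) • Aᵀ) * Cᵀ * (gramianW A B C t T)⁻¹ *
              C * NormedSpace.exp ((T - t) • A))).mulVec
          (fun ik => traj A B (ustar A B C a x₀ t₀ T) x₀ t₀ ik.1 t ik.2) := by
  rintro t ⟨ht₀t, htT⟩
  obtain ⟨X₀, rfl⟩ := vec_bijective.surjective x₀
  rw [ustar_vec, traj_ustar_vec, kronecker_mulVec_vec, vec_neg,
    feedback_mul_traj_ustar A B C X₀ (hW t₀ ⟨le_rfl, ht₀t.trans_lt htT⟩) (hW t ⟨ht₀t, htT⟩)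
      (isIdempotentElem_Lmat a).matrix_transpose]

/-- The optimal open-loop control coincides, along its own trajectory `x*`,
with the time-varying state feedback
`u(x,t) = −(L(a) ⊗ Bᵀ e^{Aᵀ(T−t)} Cᵀ W(t,T)⁻¹ C e^{A(T−t)}) x` for every `t ∈ [t₀, T)`. -/
theorem optimal_control_as_state_feedback {n m p N : ℕ}
    (A : Matrix (Fin n) (Fin n) ℝ) (B : Matrix (Fin n) (Fin m) ℝ)
    (C : Matrix (Fin p) (Fin n) ℝ) (hC : C.rank = p)
    (a : Fin N → ℝ) (ha : ∀ i, 0 < a i)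
    (t₀ T : ℝ) (ht : t₀ < T)
    (hW : ∀ t ∈ Set.Ico t₀ T, IsUnit (gramianW A B C t T))
    (x₀ : Fin N × Fin n → ℝ) :
    ∀ t ∈ Set.Ico t₀ T,
      ustar A B C a x₀ t₀ T t =
        -(Matrix.kroneckerMap (· * ·) (Lmat a)
            (Bᵀ * NormedSpace.exp ((T - t) • Aᵀ) * Cᵀ * (gramianW A B C t T)⁻¹ *
              C * NormedSpace.exp ((T - t) • A))).mulVec
          (fun ik => traj A B (ustar A B C a x₀ t₀ T) x₀ t₀ ik.1 t ik.2) :=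
  optimal_control_as_state_feedback_general A B C a t₀ T hW x₀
end

section
/- Assume C ∈ ℝ^{p×n} has full row rank, ker C is A-invariant (A v ∈ ker C whenever C v = 0), and W(t,T) is invertible for some t < T. Then G(t,T) is invertible and e^{A^T(T−t)} C^T W(t,T)^{-1} C e^{A(T−t)} = C^T G(t,T)^{-1} C. Consequently, for any x ∈ ℝ^{nN} with stacked outputs y = (I_N ⊗ C) x, −(L(a) ⊗ (B^T e^{A^T(T−t)} C^T W(t,T)^{-1} C e^{A(T−t)})) x = −(L(a) ⊗ (B^T C^T G(t,T)^{-1})) y. -/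
open Matrix MeasureTheory

attribute [local instance] Matrix.normedAddCommGroup Matrix.normedSpace

/-- `G(t,T) = ∫_0^{T−t} C e^{−A r} B Bᵀ e^{−Aᵀ r} Cᵀ dr`. -/
noncomputable def gramianG {n m p : ℕ} (A : Matrix (Fin n) (Fin n) ℝ)
    (B : Matrix (Fin n) (Fin m) ℝ) (C : Matrix (Fin p) (Fin n) ℝ) (t T : ℝ) :
    Matrix (Fin p) (Fin p) ℝ :=
  ∫ r in (0:ℝ)..(T - t), C * NormedSpace.exp ((-r) • A) * B * Bᵀ *
      NormedSpace.exp ((-r) • Aᵀ) * Cᵀ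

/-! Because `ker C` is `A`-invariant, `C A = A' C` for some `p × p` matrix `A'`, hence
`C e^{sA} = e^{sA'} C` for all `s`. Substituting `u = T - s` in `W` and pulling `e^{(T-t)A}` through
the integrand of `G` gives the factorisation `W(t,T) = E G(t,T) Eᵀ` with `E = e^{(T-t)A'}`
invertible. Inverting it yields both the invertibility of `G` and the gain identity, and the
feedback identity is then `(L ⊗ K)(I ⊗ C) = L ⊗ K C`. -/

open NormedSpace

theorem LinearMap.exists_comp_eq_of_ker_le {K V W U : Type*} [Field K] [AddCommGroup V]
    [Module K V] [AddCommGroup W] [Module K W] [AddCommGroup U] [Module K U]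
    (f : V →ₗ[K] W) (g : V →ₗ[K] U) (h : LinearMap.ker f ≤ LinearMap.ker g) :
    ∃ e : W →ₗ[K] U, e ∘ₗ f = g := by
  obtain ⟨e, he⟩ := LinearMap.exists_extend
    ((LinearMap.ker f).liftQ g h ∘ₗ f.quotKerEquivRange.symm.toLinearMap)
  refine ⟨e, LinearMap.ext fun v => ?_⟩
  simpa [LinearMap.quotKerEquivRange_symm_apply_image] using
    LinearMap.congr_fun he ⟨f v, LinearMap.mem_range_self f v⟩

@[fun_prop]
theorem Continuous.matrix_exp_smul_s7 {X m : Type*} [TopologicalSpace X] [Fintype m] [DecidableEq m]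
    {f : X → ℝ} (hf : Continuous f) (A : Matrix m m ℝ) : Continuous fun x => exp (f x • A) := by
  open scoped Matrix.Norms.Operator in
  exact exp_continuous.comp (hf.smul continuous_const)

namespace Matrix

theorem exists_mul_eq_of_mulVec_eq_zero {K p n q : Type*} [Field K] [Fintype p] [DecidableEq p]
    [Fintype n] [DecidableEq n] {C : Matrix p n K} {X : Matrix q n K}
    (h : ∀ v, C *ᵥ v = 0 → X *ᵥ v = 0) : ∃ Y : Matrix q p K, Y * C = X := by
  obtain ⟨e, he⟩ := LinearMap.exists_comp_eq_of_ker_le (toLin' C) (toLin' X) fun v hv => h v hv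
  exact ⟨LinearMap.toMatrix' e, toLin'.injective (by rw [toLin'_mul, toLin'_toMatrix', he])⟩

theorem exp_series_hasSum_exp {m : Type*} [Fintype m] [DecidableEq m] (X : Matrix m m ℝ) :
    HasSum (fun j : ℕ => ((j.factorial : ℚ)⁻¹ • X ^ j)) (exp X) := by
  open scoped Matrix.Norms.Operator in exact exp_series_hasSum_exp' X

theorem exp_mul_eq_mul_exp {m n : Type*} [Fintype m] [DecidableEq m] [Fintype n] [DecidableEq n]
    {A : Matrix n n ℝ} {A' : Matrix m m ℝ} {C : Matrix m n ℝ} (h : A' * C = C * A) :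
    exp A' * C = C * exp A := by
  have hpow : ∀ k : ℕ, A' ^ k * C = C * A ^ k := fun k => by
    induction k with
    | zero => simp
    | succ k ih => rw [pow_succ, pow_succ, Matrix.mul_assoc, h, ← Matrix.mul_assoc, ih,
        Matrix.mul_assoc]
  have hl := (exp_series_hasSum_exp A').map (addMonoidHomMulRight (l := m) C)
    (continuous_id.matrix_mul continuous_const)
  have hr := (exp_series_hasSum_exp A).map (addMonoidHomMulLeft (n := n) C)
    (continuous_const.matrix_mul continuous_id)
  simp only [Function.comp_def, addMonoidHomMulRight_apply, addMonoidHomMulLeft_apply,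
    Matrix.smul_mul, Matrix.mul_smul, hpow] at hl hr
  exact hl.unique hr

theorem exp_smul_mul_eq_mul_exp_smul {m n : Type*} [Fintype m] [DecidableEq m] [Fintype n]
    [DecidableEq n] {A : Matrix n n ℝ} {A' : Matrix m m ℝ} {C : Matrix m n ℝ}
    (h : A' * C = C * A) (s : ℝ) : exp (s • A') * C = C * exp (s • A) :=
  exp_mul_eq_mul_exp (by rw [Matrix.smul_mul, Matrix.mul_smul, h])

theorem transpose_mul_eq_mul_transpose {m n R : Type*} [Fintype m] [Fintype n] [CommSemiring R]
    {A : Matrix n n R} {A' : Matrix m m R} {C : Matrix m n R} (h : A' * C = C * A) :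
    Aᵀ * Cᵀ = Cᵀ * A'ᵀ := by
  rw [← transpose_mul, ← h, transpose_mul]

theorem exp_add_smul {m : Type*} [Fintype m] [DecidableEq m] (A : Matrix m m ℝ) (s r : ℝ) :
    exp ((s + r) • A) = exp (s • A) * exp (r • A) := by
  rw [add_smul]
  exact exp_add_of_commute _ _ (((Commute.refl A).smul_left s).smul_right r)

theorem intervalIntegral_mul_mul {l m n q : Type*} [Fintype l] [Fintype m] [Fintype n]
    [Fintype q] (X : Matrix l m ℝ) (Y : Matrix n q ℝ) {f : ℝ → Matrix m n ℝ} (hf : Continuous f)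
    (a b : ℝ) : ∫ u in a..b, X * f u * Y = X * (∫ u in a..b, f u) * Y := by
  simp only [Matrix.mul_assoc]
  exact (mulLeftLinearMap q ℝ X ∘ₗ mulRightLinearMap m ℝ Y).toContinuousLinearMap
    |>.intervalIntegral_comp_comm (hf.intervalIntegrable a b)

theorem exp_smul_mul_integral_mul_exp_smul {m n : Type*} [Fintype m] [DecidableEq m]
    [Fintype n] [DecidableEq n] (A₁ : Matrix m m ℝ) (M : Matrix m n ℝ) (A₂ : Matrix n n ℝ)
    (τ : ℝ) :
    exp (τ • A₁) * (∫ r in 0..τ, exp ((-r) • A₁) * M * exp ((-r) • A₂)) * exp (τ • A₂) =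
      ∫ u in 0..τ, exp (u • A₁) * M * exp (u • A₂) := by
  rw [← intervalIntegral_mul_mul _ _ (by fun_prop)]
  calc _ = ∫ r in 0..τ, exp ((τ - r) • A₁) * M * exp ((τ - r) • A₂) := by
        refine intervalIntegral.integral_congr fun r _ => ?_
        rw [sub_eq_add_neg, exp_add_smul A₁, add_comm, exp_add_smul A₂]
        simp only [Matrix.mul_assoc]
    _ = _ := by
        simp [intervalIntegral.integral_comp_sub_left
          (fun u => exp (u • A₁) * M * exp (u • A₂)) τ]

theorem isUnit_and_mul_inv_mul_of_eq_mul_mul {m K : Type*} [Fintype m] [DecidableEq m]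
    [CommRing K] {W E G F : Matrix m m K} (hE : IsUnit E) (hF : IsUnit F) (hW : IsUnit W)
    (h : W = E * G * F) : IsUnit G ∧ F * W⁻¹ * E = G⁻¹ := by
  rw [isUnit_iff_isUnit_det] at hE hF hW
  refine ⟨?_, ?_⟩
  · rw [h, det_mul, det_mul, IsUnit.mul_iff, IsUnit.mul_iff] at hW
    exact (isUnit_iff_isUnit_det G).mpr hW.1.2
  · rw [h, mul_inv_rev, mul_inv_rev]
    simp only [Matrix.mul_assoc, nonsing_inv_mul _ hE, mul_nonsing_inv_cancel_left _ _ hF,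
      Matrix.mul_one]

theorem kronecker_mulVec_one_kronecker_mulVec {ι ι' m n p R : Type*} [CommSemiring R]
    [Fintype ι'] [DecidableEq ι'] [Fintype n] [Fintype p] (L : Matrix ι ι' R) (K : Matrix m p R)
    (C : Matrix p n R) (x : ι' × n → R) :
    kroneckerMap (· * ·) L K *ᵥ (kroneckerMap (· * ·) (1 : Matrix ι' ι' R) C *ᵥ x) =
      kroneckerMap (· * ·) L (K * C) *ᵥ x := by
  rw [mulVec_mulVec, ← mul_kronecker_mul, Matrix.mul_one]

end Matrix

section Gramian

variable {n m p : ℕ} (A : Matrix (Fin n) (Fin n) ℝ) (B : Matrix (Fin n) (Fin m) ℝ)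
  (C : Matrix (Fin p) (Fin n) ℝ) (t T : ℝ)

theorem gramianW_eq : gramianW A B C t T =
    C * (∫ u in 0..(T - t), exp (u • A) * (B * Bᵀ) * exp (u • Aᵀ)) * Cᵀ := by
  have hsub := intervalIntegral.integral_comp_sub_left
    (fun u => C * (exp (u • A) * (B * Bᵀ) * exp (u • Aᵀ)) * Cᵀ) T (a := t) (b := T)
  rw [sub_self] at hsub
  rw [gramianW, ← Matrix.intervalIntegral_mul_mul _ _ (by fun_prop), ← hsub]
  simp only [Matrix.mul_assoc]

theorem gramianG_eq : gramianG A B C t T =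
    C * (∫ r in 0..(T - t), exp ((-r) • A) * (B * Bᵀ) * exp ((-r) • Aᵀ)) * Cᵀ := by
  rw [gramianG, ← Matrix.intervalIntegral_mul_mul _ _ (by fun_prop)]
  simp only [Matrix.mul_assoc]

variable {A C} {A' : Matrix (Fin p) (Fin p) ℝ}

theorem gramianW_eq_exp_mul_gramianG_mul_exp (hA' : A' * C = C * A) :
    gramianW A B C t T = exp ((T - t) • A') * gramianG A B C t T * exp ((T - t) • A'ᵀ) := by
  have hE := Matrix.exp_smul_mul_eq_mul_exp_smul hA' (T - t)
  have hEt :=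
    Matrix.exp_smul_mul_eq_mul_exp_smul (Matrix.transpose_mul_eq_mul_transpose hA') (T - t)
  rw [gramianW_eq, gramianG_eq, ← Matrix.exp_smul_mul_integral_mul_exp_smul]
  simp only [← Matrix.mul_assoc, ← hE]
  simp only [Matrix.mul_assoc, hEt]

theorem isUnit_gramianG_and_exp_mul_gramianW_inv_mul_exp (hA' : A' * C = C * A)
    (hW : IsUnit (gramianW A B C t T)) :
    IsUnit (gramianG A B C t T) ∧
      exp ((T - t) • Aᵀ) * Cᵀ * (gramianW A B C t T)⁻¹ * C * exp ((T - t) • A) =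
        Cᵀ * (gramianG A B C t T)⁻¹ * C := by
  have hE := Matrix.exp_smul_mul_eq_mul_exp_smul hA' (T - t)
  have hEt :=
    Matrix.exp_smul_mul_eq_mul_exp_smul (Matrix.transpose_mul_eq_mul_transpose hA') (T - t)
  have hEu : IsUnit (exp ((T - t) • A')) := Matrix.isUnit_exp _
  have hFu : IsUnit (exp ((T - t) • A'ᵀ)) := Matrix.isUnit_exp _
  obtain ⟨hG, hinv⟩ := Matrix.isUnit_and_mul_inv_mul_of_eq_mul_mul hEu hFu hW
    (gramianW_eq_exp_mul_gramianG_mul_exp B t T hA')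
  refine ⟨hG, ?_⟩
  rw [← hinv]
  simp only [Matrix.mul_assoc, hE]
  rw [← Matrix.mul_assoc _ Cᵀ, hEt, Matrix.mul_assoc]

end Gramian

theorem state_feedback_is_output_feedback_general {n m p N : ℕ}
    (A : Matrix (Fin n) (Fin n) ℝ) (B : Matrix (Fin n) (Fin m) ℝ)
    (C : Matrix (Fin p) (Fin n) ℝ)
    (hker : ∀ v : Fin n → ℝ, C.mulVec v = 0 → C.mulVec (A.mulVec v) = 0)
    (a : Fin N → ℝ)
    (t T : ℝ)
    (hW : IsUnit (gramianW A B C t T)) :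
    IsUnit (gramianG A B C t T) ∧
    NormedSpace.exp ((T - t) • Aᵀ) * Cᵀ * (gramianW A B C t T)⁻¹ *
        C * NormedSpace.exp ((T - t) • A) =
      Cᵀ * (gramianG A B C t T)⁻¹ * C ∧
    ∀ x : Fin N × Fin n → ℝ,
      -(Matrix.kroneckerMap (· * ·) (Lmat a)
          (Bᵀ * NormedSpace.exp ((T - t) • Aᵀ) * Cᵀ * (gramianW A B C t T)⁻¹ *
            C * NormedSpace.exp ((T - t) • A))).mulVec x =
      -(Matrix.kroneckerMap (· * ·) (Lmat a)
          (Bᵀ * Cᵀ * (gramianG A B C t T)⁻¹)).mulVec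
        ((Matrix.kroneckerMap (· * ·) (1 : Matrix (Fin N) (Fin N) ℝ) C).mulVec x) := by
  obtain ⟨A', hA'⟩ : ∃ A' : Matrix (Fin p) (Fin p) ℝ, A' * C = C * A :=
    Matrix.exists_mul_eq_of_mulVec_eq_zero fun v hv => by rw [← mulVec_mulVec, hker v hv]
  obtain ⟨hG, hgain⟩ := isUnit_gramianG_and_exp_mul_gramianW_inv_mul_exp B t T hA' hW
  refine ⟨hG, hgain, fun x => ?_⟩
  rw [Matrix.kronecker_mulVec_one_kronecker_mulVec]
  simp only [Matrix.mul_assoc] at hgain ⊢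
  rw [hgain]

/-- If `C` has full row rank, `ker C` is `A`-invariant and `W(t,T)` is
invertible (`t < T`), then `G(t,T)` is invertible,
`e^{Aᵀ(T−t)} Cᵀ W(t,T)⁻¹ C e^{A(T−t)} = Cᵀ G(t,T)⁻¹ C`, and consequently the state feedback
`−(L(a) ⊗ Bᵀ e^{Aᵀ(T−t)} Cᵀ W(t,T)⁻¹ C e^{A(T−t)}) x` equals the output feedback
`−(L(a) ⊗ Bᵀ Cᵀ G(t,T)⁻¹) y` with `y = (I_N ⊗ C) x`. -/
theorem state_feedback_is_output_feedback {n m p N : ℕ}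
    (A : Matrix (Fin n) (Fin n) ℝ) (B : Matrix (Fin n) (Fin m) ℝ)
    (C : Matrix (Fin p) (Fin n) ℝ) (hC : C.rank = p)
    (hker : ∀ v : Fin n → ℝ, C.mulVec v = 0 → C.mulVec (A.mulVec v) = 0)
    (a : Fin N → ℝ) (ha : ∀ i, 0 < a i)
    (t T : ℝ) (ht : t < T)
    (hW : IsUnit (gramianW A B C t T)) :
    IsUnit (gramianG A B C t T) ∧
    NormedSpace.exp ((T - t) • Aᵀ) * Cᵀ * (gramianW A B C t T)⁻¹ *
        C * NormedSpace.exp ((T - t) • A) =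
      Cᵀ * (gramianG A B C t T)⁻¹ * C ∧
    ∀ x : Fin N × Fin n → ℝ,
      -(Matrix.kroneckerMap (· * ·) (Lmat a)
          (Bᵀ * NormedSpace.exp ((T - t) • Aᵀ) * Cᵀ * (gramianW A B C t T)⁻¹ *
            C * NormedSpace.exp ((T - t) • A))).mulVec x =
      -(Matrix.kroneckerMap (· * ·) (Lmat a)
          (Bᵀ * Cᵀ * (gramianG A B C t T)⁻¹)).mulVec
        ((Matrix.kroneckerMap (· * ·) (1 : Matrix (Fin N) (Fin N) ℝ) C).mulVec x) :=
  state_feedback_is_output_feedback_general A B C hker a t T hW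
end

section
/- Fix T ∈ ℝ and assume W(t,T) is invertible for all t in an open interval I ⊆ (−∞, T). Then the matrix-valued function P(t) = e^{A^T(T−t)} C^T W(t,T)^{-1} C e^{A(T−t)} is differentiable on I and satisfies the differential Riccati equation dP/dt = −A^T P − P A + P B B^T P. -/
/-!
Each of the five factors of `P(t) = e^{Aᵀ(T−t)} Cᵀ W(t,T)⁻¹ C e^{A(T−t)}` is differentiable:
`d/dt e^{M(T−t)} = −M e^{M(T−t)} = −e^{M(T−t)} M`, the fundamental theorem of calculus gives
`d/dt W(t,T) = −C e^{A(T−t)} B Bᵀ e^{Aᵀ(T−t)} Cᵀ`, and `d/dt W⁻¹ = −W⁻¹ Ẇ W⁻¹`. In the product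
rule the exponential factors contribute `−Aᵀ P − P A`, while the inverse factor contributes
`e^{Aᵀ(T−t)} Cᵀ W⁻¹ (C e^{A(T−t)} B Bᵀ e^{Aᵀ(T−t)} Cᵀ) W⁻¹ C e^{A(T−t)} = P B Bᵀ P`.
-/

open Matrix MeasureTheory

attribute [local instance] Matrix.normedAddCommGroup Matrix.normedSpace

/-- `P(t) = e^{Aᵀ(T−t)} Cᵀ W(t,T)⁻¹ C e^{A(T−t)}`. -/
noncomputable def riccatiP {n m p : ℕ} (A : Matrix (Fin n) (Fin n) ℝ)
    (B : Matrix (Fin n) (Fin m) ℝ) (C : Matrix (Fin p) (Fin n) ℝ) (T t : ℝ) :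
    Matrix (Fin n) (Fin n) ℝ :=
  NormedSpace.exp ((T - t) • Aᵀ) * Cᵀ * (gramianW A B C t T)⁻¹ *
    C * NormedSpace.exp ((T - t) • A)

theorem HasDerivAt.matrix_mul {𝕜 l m n : Type*} [NontriviallyNormedField 𝕜]
    [Fintype l] [Fintype m] [Fintype n]
    {f : 𝕜 → Matrix l m 𝕜} {g : 𝕜 → Matrix m n 𝕜} {f' : Matrix l m 𝕜} {g' : Matrix m n 𝕜}
    {x : 𝕜} (hf : HasDerivAt f f' x) (hg : HasDerivAt g g' x) :
    HasDerivAt (fun y => f y * g y) (f' * g x + f x * g') x := by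
  have hf (i k) : HasDerivAt (fun y => f y i k) (f' i k) x :=
    hasDerivAt_pi.1 (hasDerivAt_pi.1 hf i) k
  have hg (k j) : HasDerivAt (fun y => g y k j) (g' k j) x :=
    hasDerivAt_pi.1 (hasDerivAt_pi.1 hg k) j
  refine hasDerivAt_pi.2 fun i => hasDerivAt_pi.2 fun j => ?_
  simp only [Matrix.add_apply, Matrix.mul_apply, ← Finset.sum_add_distrib]
  exact HasDerivAt.fun_sum fun k _ => (hf i k).mul (hg k j)

theorem HasDerivAt.matrix_mul_const {𝕜 l m n : Type*} [NontriviallyNormedField 𝕜]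
    [Fintype l] [Fintype m] [Fintype n]
    {f : 𝕜 → Matrix l m 𝕜} {f' : Matrix l m 𝕜} {x : 𝕜} (hf : HasDerivAt f f' x)
    (M : Matrix m n 𝕜) :
    HasDerivAt (fun y => f y * M) (f' * M) x := by
  simpa using hf.matrix_mul (hasDerivAt_const x M)

/- The derivative only sees the topology of `Matrix ι ι ℝ`, which the operator norm shares with
the entrywise norm; the operator norm makes the matrices a Banach algebra. -/
section OperatorNorm

open scoped Matrix.Norms.Operator

variable {ι : Type*} [Fintype ι] [DecidableEq ι]

theorem Matrix.hasDerivAt_exp_const_sub_smul (M : Matrix ι ι ℝ) (T t : ℝ) :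
    HasDerivAt (fun u : ℝ => NormedSpace.exp ((T - u) • M))
      (-(M * NormedSpace.exp ((T - t) • M))) t := by
  have h := (hasDerivAt_exp_smul_const' M (T - t)).scomp t ((hasDerivAt_id t).const_sub T)
  simp only [Function.comp_def, neg_one_smul] at h
  exact h

theorem Matrix.hasDerivAt_exp_const_sub_smul' (M : Matrix ι ι ℝ) (T t : ℝ) :
    HasDerivAt (fun u : ℝ => NormedSpace.exp ((T - u) • M))
      (-(NormedSpace.exp ((T - t) • M) * M)) t := by
  have h := (hasDerivAt_exp_smul_const M (T - t)).scomp t ((hasDerivAt_id t).const_sub T)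
  simp only [Function.comp_def, neg_one_smul] at h
  exact h

theorem HasDerivAt.matrix_inv {W : ℝ → Matrix ι ι ℝ} {W' : Matrix ι ι ℝ} {t : ℝ}
    (hW : HasDerivAt W W' t) (hWt : IsUnit (W t)) :
    HasDerivAt (fun u => (W u)⁻¹) (-((W t)⁻¹ * W' * (W t)⁻¹)) t := by
  obtain ⟨w, hw⟩ := hWt
  have h := (hw ▸ hasFDerivAt_ringInverse (𝕜 := ℝ) w).comp_hasDerivAt t hW
  simp only [Function.comp_def, ← nonsing_inv_eq_ringInverse] at h
  rwa [← hw, ← Matrix.coe_units_inv]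

end OperatorNorm

theorem hasDerivAt_gramianW_left {n m p : ℕ} (A : Matrix (Fin n) (Fin n) ℝ)
    (B : Matrix (Fin n) (Fin m) ℝ) (C : Matrix (Fin p) (Fin n) ℝ) (T t : ℝ) :
    HasDerivAt (fun u => gramianW A B C u T)
      (-(C * NormedSpace.exp ((T - t) • A) * B * Bᵀ * NormedSpace.exp ((T - t) • Aᵀ) * Cᵀ))
      t := by
  have hexp (M : Matrix (Fin n) (Fin n) ℝ) :
      Continuous fun s : ℝ => NormedSpace.exp ((T - s) • M) :=
    continuous_iff_continuousAt.2 fun s =>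
      (Matrix.hasDerivAt_exp_const_sub_smul M T s).continuousAt
  have hcont : Continuous fun s : ℝ =>
      C * NormedSpace.exp ((T - s) • A) * B * Bᵀ * NormedSpace.exp ((T - s) • Aᵀ) * Cᵀ := by
    have := hexp A
    have := hexp Aᵀ
    fun_prop
  -- instance search does not unfold `Matrix` to the product space
  have : TopologicalSpace.PseudoMetrizableSpace (Matrix (Fin p) (Fin p) ℝ) :=
    inferInstanceAs (TopologicalSpace.PseudoMetrizableSpace (Fin p → Fin p → ℝ))
  exact intervalIntegral.integral_hasDerivAt_left (hcont.intervalIntegrable t T)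
    (hcont.stronglyMeasurableAtFilter _ _) hcont.continuousAt

theorem riccati_differential_equation_general {n m p : ℕ}
    (A : Matrix (Fin n) (Fin n) ℝ) (B : Matrix (Fin n) (Fin m) ℝ)
    (C : Matrix (Fin p) (Fin n) ℝ)
    (T a b : ℝ)
    (hW : ∀ t ∈ Set.Ioo a b, IsUnit (gramianW A B C t T)) :
    ∀ t ∈ Set.Ioo a b,
      HasDerivAt (riccatiP A B C T)
        (-(Aᵀ * riccatiP A B C T t) - riccatiP A B C T t * A +
          riccatiP A B C T t * B * Bᵀ * riccatiP A B C T t) t := by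
  intro t ht
  have hWinv := (hasDerivAt_gramianW_left A B C T t).matrix_inv (hW t ht)
  have hP := ((((Matrix.hasDerivAt_exp_const_sub_smul Aᵀ T t).matrix_mul_const Cᵀ).matrix_mul
    hWinv).matrix_mul_const C).matrix_mul (Matrix.hasDerivAt_exp_const_sub_smul' A T t)
  refine hP.congr_deriv ?_
  simp only [riccatiP, Matrix.neg_mul, Matrix.mul_neg, neg_neg, Matrix.mul_assoc,
    Matrix.add_mul]
  abel

/-- On any open interval `I = (a, b) ⊆ (−∞, T)` on which `W(t,T)` is
invertible, the matrix function `P(t) = e^{Aᵀ(T−t)} Cᵀ W(t,T)⁻¹ C e^{A(T−t)}` is differentiable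
and satisfies the differential Riccati equation `dP/dt = −Aᵀ P − P A + P B Bᵀ P`. -/
theorem riccati_differential_equation {n m p : ℕ}
    (A : Matrix (Fin n) (Fin n) ℝ) (B : Matrix (Fin n) (Fin m) ℝ)
    (C : Matrix (Fin p) (Fin n) ℝ)
    (T a b : ℝ) (hIT : Set.Ioo a b ⊆ Set.Iio T)
    (hW : ∀ t ∈ Set.Ioo a b, IsUnit (gramianW A B C t T)) :
    ∀ t ∈ Set.Ioo a b,
      HasDerivAt (riccatiP A B C T)
        (-(Aᵀ * riccatiP A B C T t) - riccatiP A B C T t * A +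
          riccatiP A B C T t * B * Bᵀ * riccatiP A B C T t) t :=
  riccati_differential_equation_general A B C T a b hW
end

section
/- Let P_0 ∈ ℝ^{n×n} be symmetric positive semidefinite with A^T P_0 + P_0 A = P_0 B B^T P_0, and suppose A − B B^T P_0 is Hurwitz. If x : [0,∞) → ℝ^n solves ẋ = (A − B B^T P_0) x with x(0) = x_0, then ∫_0^∞ ‖B^T P_0 x(t)‖² dt = x_0^T P_0 x_0; that is, the feedback u = −B^T P_0 x incurs total control energy exactly x_0^T P_0 x_0. -/
open Matrix MeasureTheory

/-- A real square matrix is Hurwitz if every eigenvalue of its complexification has strictly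
negative real part. -/
def IsHurwitz {n : ℕ} (M : Matrix (Fin n) (Fin n) ℝ) : Prop :=
  ∀ μ ∈ spectrum ℂ (M.map (algebraMap ℝ ℂ)), μ.re < 0

/-!
`V(x) = xᵀ P₀ x` is a Lyapunov function for the closed loop `M = A − B Bᵀ P₀`: the Riccati
equation turns the Lyapunov operator `Mᵀ P₀ + P₀ M` into `−(Bᵀ P₀)ᵀ (Bᵀ P₀)`, so
`d/dt V(x(t)) = −‖Bᵀ P₀ x(t)‖²`. By uniqueness of solutions `x(t) = exp(t M) x₀`, and this tends
to `0` because `M` is Hurwitz: on a generalized eigenvector for `μ`, `exp(t M)` acts as `e^{tμ}`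
times a polynomial in `t`, and such vectors span `ℂⁿ`. The integral of `−d/dt V(x(t))` over
`(0, ∞)` is therefore `V(x₀) − lim V(x(t)) = V(x₀)`.
-/

open Filter Topology Set Finset
open scoped Matrix.Norms.Operator

section

variable {ι κ R : Type*} [Fintype ι] [Fintype κ] [CommRing R]

theorem Matrix.closedLoop_lyapunov_eq_of_riccati {A P : Matrix ι ι R} {B : Matrix ι κ R}
    (hare : Aᵀ * P + P * A = P * B * Bᵀ * P) :
    (A - B * Bᵀ * P)ᵀ * P + P * (A - B * Bᵀ * P) = -((Bᵀ * P)ᵀ * (Bᵀ * P)) := by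
  simp only [transpose_sub, transpose_mul, transpose_transpose]
  calc _ = (Aᵀ * P + P * A) - Pᵀ * B * Bᵀ * P - P * B * Bᵀ * P := by
        simp only [Matrix.mul_sub, Matrix.sub_mul, Matrix.mul_assoc]; abel
    _ = _ := by rw [hare]; simp only [Matrix.mul_assoc]; abel

theorem Matrix.dotProduct_transpose_mul_self_mulVec (C : Matrix κ ι R) (w : ι → R) :
    w ⬝ᵥ (Cᵀ * C) *ᵥ w = ∑ k, (C *ᵥ w) k ^ 2 := by
  rw [← mulVec_mulVec, dotProduct_mulVec, vecMul_transpose, dotProduct_comm]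
  simp [dotProduct, sq]

theorem Matrix.mulVec_dotProduct_mulVec_add (M P : Matrix ι ι R) (w : ι → R) :
    M *ᵥ w ⬝ᵥ P *ᵥ w + w ⬝ᵥ P *ᵥ (M *ᵥ w) = w ⬝ᵥ (Mᵀ * P + P * M) *ᵥ w := by
  rw [add_mulVec, dotProduct_add, ← mulVec_mulVec, ← mulVec_mulVec, dotProduct_mulVec w Mᵀ,
    vecMul_transpose, dotProduct_comm]

end

section

variable {ι κ 𝕜 : Type*} [Fintype ι] [NontriviallyNormedField 𝕜]
  {s : Set 𝕜} {t : 𝕜}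

theorem HasDerivWithinAt.dotProduct {f g : 𝕜 → ι → 𝕜} {f' g' : ι → 𝕜}
    (hf : HasDerivWithinAt f f' s t) (hg : HasDerivWithinAt g g' s t) :
    HasDerivWithinAt (fun τ => f τ ⬝ᵥ g τ) (f' ⬝ᵥ g t + f t ⬝ᵥ g') s t := by
  simp only [_root_.dotProduct, ← Finset.sum_add_distrib]
  exact HasDerivWithinAt.fun_sum fun i _ =>
    (hasDerivWithinAt_pi.mp hf i).mul (hasDerivWithinAt_pi.mp hg i)

theorem HasDerivWithinAt.mulVec {f : 𝕜 → ι → 𝕜} {f' : ι → 𝕜}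
    (hf : HasDerivWithinAt f f' s t) (P : Matrix κ ι 𝕜) :
    HasDerivWithinAt (fun τ => P *ᵥ f τ) (P *ᵥ f') s t :=
  hasDerivWithinAt_pi.mpr fun i =>
    HasDerivWithinAt.fun_sum fun j _ => (hasDerivWithinAt_pi.mp hf j).const_mul (P i j)

theorem HasDerivWithinAt.dotProduct_mulVec_self {x : 𝕜 → ι → 𝕜} {M : Matrix ι ι 𝕜}
    (hx : HasDerivWithinAt x (M *ᵥ x t) s t) (P : Matrix ι ι 𝕜) :
    HasDerivWithinAt (fun τ => x τ ⬝ᵥ P *ᵥ x τ) (x t ⬝ᵥ (Mᵀ * P + P * M) *ᵥ x t) s t := by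
  rw [← mulVec_dotProduct_mulVec_add]
  exact hx.dotProduct (hx.mulVec P)

end

theorem Complex.tendsto_exp_ofReal_mul_mul_pow_atTop {μ : ℂ} (hμ : μ.re < 0) (i : ℕ) :
    Tendsto (fun t : ℝ => Complex.exp (t * μ) * (t : ℂ) ^ i) atTop (𝓝 0) := by
  rw [tendsto_zero_iff_norm_tendsto_zero]
  refine (tendsto_rpow_mul_exp_neg_mul_atTop_nhds_zero i (-μ.re) (by linarith)).congr' ?_
  filter_upwards [eventually_ge_atTop 0] with t ht
  simp [Complex.norm_exp, abs_of_nonneg ht, mul_comm]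

section

variable {ι : Type*} [Fintype ι] [DecidableEq ι]

theorem Matrix.exp_smul_mulVec_of_pow_mulVec_eq_zero {N : Matrix ι ι ℂ} {v : ι → ℂ} {K : ℕ}
    (hv : N ^ K *ᵥ v = 0) (z : ℂ) :
    NormedSpace.exp (z • N) *ᵥ v = ∑ i ∈ range K, (z ^ i / i.factorial) • (N ^ i *ᵥ v) := by
  let L : Matrix ι ι ℂ →L[ℂ] ι → ℂ := LinearMap.toContinuousLinearMap ((mulVecBilin ℂ ℂ).flip v)
  have hexp := (NormedSpace.exp_series_hasSum_exp' (𝕂 := ℂ) (z • N)).mapL L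
  have hterm (i : ℕ) :
      L ((i.factorial⁻¹ : ℂ) • (z • N) ^ i) = (z ^ i / i.factorial) • (N ^ i *ᵥ v) := by
    simp [L, smul_pow, smul_smul, div_eq_inv_mul]
  simp only [hterm] at hexp
  refine hexp.unique (hasSum_sum_of_ne_finset_zero fun i hi => ?_)
  rw [← Nat.sub_add_cancel (not_lt.mp (mem_range.not.mp hi)), pow_add N, ← mulVec_mulVec, hv,
    mulVec_zero, smul_zero]

theorem Matrix.tendsto_exp_smul_mulVec_of_pow_sub_mulVec_eq_zero {M : Matrix ι ι ℂ} {μ : ℂ}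
    (hμ : μ.re < 0) {v : ι → ℂ} {K : ℕ} (hv : (M - μ • 1) ^ K *ᵥ v = 0) :
    Tendsto (fun t : ℝ => NormedSpace.exp ((t : ℂ) • M) *ᵥ v) atTop (𝓝 0) := by
  have hsplit (t : ℝ) : NormedSpace.exp ((t : ℂ) • M) *ᵥ v = ∑ i ∈ range K,
      (Complex.exp (t * μ) * (t : ℂ) ^ i / i.factorial) • ((M - μ • 1) ^ i *ᵥ v) := by
    have hcomm : Commute ((t * μ) • (1 : Matrix ι ι ℂ)) ((t : ℂ) • (M - μ • 1)) :=
      ((Commute.one_left _).smul_left _).smul_right _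
    have hscalar : NormedSpace.exp ((t * μ) • (1 : Matrix ι ι ℂ)) = Complex.exp (t * μ) • 1 := by
      simp only [← Algebra.algebraMap_eq_smul_one, Complex.exp_eq_exp_ℂ]
      exact (NormedSpace.algebraMap_exp_comm _).symm
    rw [show (t : ℂ) • M = (t * μ) • (1 : Matrix ι ι ℂ) + (t : ℂ) • (M - μ • 1) by
        rw [smul_sub, smul_smul]; abel,
      Matrix.exp_add_of_commute _ _ hcomm, hscalar, smul_mul_assoc, one_mul, smul_mulVec,
      exp_smul_mulVec_of_pow_mulVec_eq_zero hv, Finset.smul_sum]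
    simp only [smul_smul, mul_div_assoc]
  simp only [hsplit]
  simpa using tendsto_finsetSum (range K) fun i _ =>
    ((Complex.tendsto_exp_ofReal_mul_mul_pow_atTop hμ i).div_const (i.factorial : ℂ)).smul_const
      ((M - μ • 1) ^ i *ᵥ v)

theorem Matrix.tendsto_exp_smul_mulVec_of_forall_spectrum_re_neg {M : Matrix ι ι ℂ}
    (hM : ∀ μ ∈ spectrum ℂ M, μ.re < 0) (v : ι → ℂ) :
    Tendsto (fun t : ℝ => NormedSpace.exp ((t : ℂ) • M) *ᵥ v) atTop (𝓝 0) := by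
  have hv : v ∈ ⨆ μ, Module.End.maxGenEigenspace (toLinAlgEquiv' M) μ := by
    rw [Module.End.iSup_maxGenEigenspace_eq_top]; trivial
  refine Submodule.iSup_induction _ hv (motive := fun w =>
    Tendsto (fun t : ℝ => NormedSpace.exp ((t : ℂ) • M) *ᵥ w) atTop (𝓝 0)) ?_ (by simp) ?_
  · intro μ w hw
    rcases eq_or_ne w 0 with rfl | hw0
    · simp
    have hμ : μ ∈ spectrum ℂ M := by
      rw [← AlgEquiv.spectrum_eq toLinAlgEquiv', ← Module.End.hasEigenvalue_iff_mem_spectrum]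
      exact Module.End.HasUnifEigenvalue.lt zero_lt_one
        ((Submodule.ne_bot_iff _).mpr ⟨w, hw, hw0⟩)
    obtain ⟨K, hK⟩ := (Module.End.mem_maxGenEigenspace _ _ _).mp hw
    refine tendsto_exp_smul_mulVec_of_pow_sub_mulVec_eq_zero (hM μ hμ) (K := K) ?_
    rw [← map_one toLinAlgEquiv', ← map_smul, ← map_sub, ← map_pow] at hK
    exact hK
  · intro w₁ w₂ h₁ h₂
    simpa [mulVec_add] using h₁.add h₂

theorem Matrix.map_exp_smul_ofReal (M : Matrix ι ι ℝ) (t : ℝ) :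
    (NormedSpace.exp (t • M)).map (algebraMap ℝ ℂ) =
      NormedSpace.exp ((t : ℂ) • M.map (algebraMap ℝ ℂ)) := by
  have hcont : Continuous (algebraMap ℝ ℂ).mapMatrix :=
    continuous_id.matrix_map (n := ι) (m := ι) Complex.continuous_ofReal
  have hmap := NormedSpace.map_exp (algebraMap ℝ ℂ).mapMatrix hcont (t • M)
  refine hmap.trans ?_
  congr 1
  ext i j
  simp

theorem IsHurwitz.tendsto_exp_smul_mulVec {n : ℕ} {M : Matrix (Fin n) (Fin n) ℝ}
    (hM : IsHurwitz M) (v : Fin n → ℝ) :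
    Tendsto (fun t : ℝ => NormedSpace.exp (t • M) *ᵥ v) atTop (𝓝 0) := by
  have hC := tendsto_exp_smul_mulVec_of_forall_spectrum_re_neg hM (fun i => (v i : ℂ))
  have hre := ((continuous_pi fun i => Complex.continuous_re.comp (continuous_apply i)).tendsto
    0).comp hC
  refine hre.congr fun t => ?_
  ext i
  have hcast := RingHom.map_mulVec (algebraMap ℝ ℂ) (NormedSpace.exp (t • M)) v i
  rw [map_exp_smul_ofReal] at hcast
  exact congrArg Complex.re hcast.symm

theorem Matrix.eqOn_exp_smul_mulVec_of_hasDerivWithinAt {M : Matrix ι ι ℝ} {x : ℝ → ι → ℝ}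
    (hode : ∀ t ∈ Ici (0 : ℝ), HasDerivWithinAt x (M *ᵥ x t) (Ici 0) t) :
    EqOn x (fun t => NormedSpace.exp (t • M) *ᵥ x 0) (Ici 0) := by
  have hexp : ∀ t : ℝ, HasDerivAt (fun t : ℝ => NormedSpace.exp (t • M) *ᵥ x 0)
      (M *ᵥ (NormedSpace.exp (t • M) *ᵥ x 0)) t := fun t => by
    rw [mulVec_mulVec]
    exact (LinearMap.toContinuousLinearMap ((mulVecBilin ℝ ℝ).flip (x 0))).hasFDerivAt
      |>.comp_hasDerivAt t (hasDerivAt_exp_smul_const' (𝕂 := ℝ) M t)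
  intro T hT
  exact ODE_solution_unique (v := fun _ w => M *ᵥ w)
    (fun _ => (LinearMap.toContinuousLinearMap (mulVecLin M)).lipschitz)
    (fun s hs => (hode s hs.1).continuousWithinAt.mono Icc_subset_Ici_self)
    (fun s hs => (hode s hs.1).mono (Ici_subset_Ici.mpr hs.1))
    (fun s _ => (hexp s).continuousAt.continuousWithinAt)
    (fun s _ => (hexp s).hasDerivWithinAt) (by simp) ⟨hT, le_rfl⟩

end

theorem closed_loop_energy_identity_general {n m : ℕ}
    (A : Matrix (Fin n) (Fin n) ℝ) (B : Matrix (Fin n) (Fin m) ℝ)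
    (P₀ : Matrix (Fin n) (Fin n) ℝ)
    (hare : Aᵀ * P₀ + P₀ * A = P₀ * B * Bᵀ * P₀)
    (hhur : IsHurwitz (A - B * Bᵀ * P₀))
    (x : ℝ → Fin n → ℝ) (x₀ : Fin n → ℝ) (hx0 : x 0 = x₀)
    (hode : ∀ t ∈ Set.Ici (0:ℝ),
      HasDerivWithinAt x ((A - B * Bᵀ * P₀).mulVec (x t)) (Set.Ici 0) t) :
    ∫ t in Set.Ioi (0:ℝ), ∑ k, ((Bᵀ * P₀).mulVec (x t) k) ^ 2 =
      dotProduct x₀ (P₀.mulVec x₀) := by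
  have hdecay : Tendsto x atTop (𝓝 0) :=
    (hhur.tendsto_exp_smul_mulVec (x 0)).congr' <| eventuallyEq_of_mem (Ici_mem_atTop 0)
      (eqOn_exp_smul_mulVec_of_hasDerivWithinAt hode).symm
  have hV : Tendsto (fun t => -(x t ⬝ᵥ P₀ *ᵥ x t)) atTop (𝓝 0) := by
    simpa using (((by fun_prop : Continuous fun w : Fin n → ℝ => w ⬝ᵥ P₀ *ᵥ w).tendsto 0).comp
      hdecay).neg
  have hderiv : ∀ t ∈ Ici (0 : ℝ), HasDerivWithinAt (fun τ => -(x τ ⬝ᵥ P₀ *ᵥ x τ))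
      (∑ k, ((Bᵀ * P₀) *ᵥ x t) k ^ 2) (Ici 0) t := fun t ht => by
    have h := ((hode t ht).dotProduct_mulVec_self P₀).fun_neg
    rwa [closedLoop_lyapunov_eq_of_riccati hare, neg_mulVec, dotProduct_neg, neg_neg,
      dotProduct_transpose_mul_self_mulVec] at h
  rw [integral_Ioi_of_hasDerivAt_of_nonneg (hderiv 0 self_mem_Ici).continuousWithinAt
    (fun t ht => (hderiv t (Ioi_subset_Ici_self ht)).hasDerivAt (Ici_mem_nhds ht))
    (fun t _ => by positivity) hV, hx0]
  ring

/-- If `P₀` is symmetric positive semidefinite with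
`Aᵀ P₀ + P₀ A = P₀ B Bᵀ P₀` and `A − B Bᵀ P₀` is Hurwitz, then along any solution of the
closed loop `ẋ = (A − B Bᵀ P₀) x`, `x(0) = x₀`, the total energy of the feedback
`u = −Bᵀ P₀ x` is `∫_0^∞ ‖Bᵀ P₀ x(t)‖² dt = x₀ᵀ P₀ x₀`. -/
theorem closed_loop_energy_identity {n m : ℕ}
    (A : Matrix (Fin n) (Fin n) ℝ) (B : Matrix (Fin n) (Fin m) ℝ)
    (P₀ : Matrix (Fin n) (Fin n) ℝ) (hP : P₀.PosSemidef)
    (hare : Aᵀ * P₀ + P₀ * A = P₀ * B * Bᵀ * P₀)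
    (hhur : IsHurwitz (A - B * Bᵀ * P₀))
    (x : ℝ → Fin n → ℝ) (x₀ : Fin n → ℝ) (hx0 : x 0 = x₀)
    (hode : ∀ t ∈ Set.Ici (0:ℝ),
      HasDerivWithinAt x ((A - B * Bᵀ * P₀).mulVec (x t)) (Set.Ici 0) t) :
    ∫ t in Set.Ioi (0:ℝ), ∑ k, ((Bᵀ * P₀).mulVec (x t) k) ^ 2 =
      dotProduct x₀ (P₀.mulVec x₀) :=
  closed_loop_energy_identity_general A B P₀ hare hhur x x₀ hx0 hode
end

section
/- Let P_0 ∈ ℝ^{n×n} be symmetric positive semidefinite with A^T P_0 + P_0 A = P_0 B B^T P_0 and A − B B^T P_0 Hurwitz. Consider N agents ẋ_i = A x_i + B u_i, y_i = C x_i under the static state feedback u = −(L(a) ⊗ B^T P_0) x, equivalently u_i = (Σ_{k=1}^N a_k)^{-1} Σ_{j=1}^N a_j B^T P_0 (x_j − x_i). Then the deviations δ_i = x_i − (Σ_{k=1}^N a_k)^{-1} Σ_{j=1}^N a_j x_j satisfy δ̇_i = (A − B B^T P_0) δ_i and converge to 0 as t → ∞; consequently the agents reach asymptotic output consensus: y_i(t)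 − y_j(t) → 0 as t → ∞ for all i, j. -/
/-!
Let `c(t)` be the `a`-weighted centre of mass of the states. The feedback acting on agent `i` is
`B Bᵀ P₀ (c - xᵢ)`, whose weighted mean vanishes; hence `ċ = A c` and every deviation
`δᵢ = xᵢ - c` solves `δ̇ᵢ = (A - B Bᵀ P₀) δᵢ`. A solution of `ẏ = M y` with `M` Hurwitz tends to
zero: after complexification `y(t) = exp (t M) y(0)`, and on a generalized eigenvector for `μ` the
exponential is `e^{tμ}` times a polynomial in `t`, which decays since `Re μ < 0`. Finally
`C xᵢ - C xⱼ = C (δᵢ - δⱼ)`.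
-/

open Matrix MeasureTheory Filter

open Topology

theorem Complex.tendsto_exp_mul_mul_pow_atTop_nhds_zero {μ : ℂ} (hμ : μ.re < 0) (j : ℕ) :
    Tendsto (fun t : ℝ => Complex.exp (t * μ) * t ^ j) atTop (𝓝 0) := by
  rw [tendsto_zero_iff_norm_tendsto_zero]
  refine (tendsto_rpow_mul_exp_neg_mul_atTop_nhds_zero j (-μ.re) (by linarith)).congr' ?_
  filter_upwards [eventually_ge_atTop 0] with t ht
  rw [norm_mul, Complex.norm_exp, Complex.re_ofReal_mul, norm_pow, Complex.norm_real,
    Real.norm_of_nonneg ht, Real.rpow_natCast, neg_neg, mul_comm μ.re, mul_comm]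

section MatrixExponential

open NormedSpace

attribute [local instance] Matrix.linftyOpNormedRing Matrix.linftyOpNormedAlgebra

namespace Matrix

variable {ι : Type*} [Fintype ι] [DecidableEq ι] {𝕂 : Type*} [RCLike 𝕂]

theorem hasDerivAt_exp_smul_mulVec (M : Matrix ι ι 𝕂) (v : ι → 𝕂) (t : ℝ) :
    HasDerivAt (fun s : ℝ => exp (s • M) *ᵥ v) (M *ᵥ (exp (t • M) *ᵥ v)) t := by
  have hmul := ((mulVecBilin ℝ ℝ : Matrix ι ι 𝕂 →ₗ[ℝ] _).toContinuousBilinearMap.flip v).hasFDerivAt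
    |>.comp_hasDerivAt t (hasDerivAt_exp_smul_const' M t)
  rw [mulVec_mulVec]
  exact hmul

theorem eq_exp_smul_mulVec_of_hasDerivAt (M : Matrix ι ι 𝕂) {f : ℝ → ι → 𝕂}
    (hf : ∀ t, HasDerivAt f (M *ᵥ f t) t) (t : ℝ) : f t = exp (t • M) *ᵥ f 0 := by
  have hsol := ODE_solution_unique_univ (v := fun _ => (M *ᵥ ·)) (s := fun _ => Set.univ)
    (t₀ := 0) (fun _ => (LinearMap.toContinuousLinearMap M.mulVecLin).lipschitz.lipschitzOnWith)
    (fun t => ⟨hf t, trivial⟩) (fun t => ⟨hasDerivAt_exp_smul_mulVec M (f 0) t, trivial⟩)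
    (by simp)
  exact congrFun hsol t

theorem exp_smul_mulVec_eq_sum_of_pow_mulVec_eq_zero (M : Matrix ι ι 𝕂)
    {μ : 𝕂} {k : ℕ} {w : ι → 𝕂} (hk : (M - μ • 1) ^ k *ᵥ w = 0) (s : 𝕂) :
    exp (s • M) *ᵥ w =
      exp (s * μ) • ∑ j ∈ Finset.range k, (s ^ j / j.factorial) • ((M - μ • 1) ^ j *ᵥ w) := by
  set N := M - μ • 1
  have hsplit : s • M = algebraMap 𝕂 (Matrix ι ι 𝕂) (s * μ) + s • N := by
    simp [N, Algebra.algebraMap_eq_smul_one, smul_sub, smul_smul]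
  have hvanish : ∀ j ∉ Finset.range k, ((j.factorial : 𝕂)⁻¹ • (s • N) ^ j) *ᵥ w = 0 := by
    intro j hj
    rw [smul_pow, smul_mulVec, smul_mulVec,
      ← pow_sub_mul_pow N (not_lt.mp (Finset.mem_range.not.mp hj)), ← mulVec_mulVec, hk,
      mulVec_zero, smul_zero, smul_zero]
  have hnil : exp (s • N) *ᵥ w = ∑ j ∈ Finset.range k, (s ^ j / j.factorial) • (N ^ j *ᵥ w) := by
    have hmap := ((mulVecBilin 𝕂 𝕂 : Matrix ι ι 𝕂 →ₗ[𝕂] _).toContinuousBilinearMap.flip w).map_tsum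
      (expSeries_summable' (𝕂 := 𝕂) (s • N))
    rw [exp_eq_tsum 𝕂]
    refine hmap.trans ((tsum_eq_sum (f := fun j => ((j.factorial : 𝕂)⁻¹ • (s • N) ^ j) *ᵥ w)
      hvanish).trans (Finset.sum_congr rfl fun j _ => ?_))
    rw [smul_pow, smul_mulVec, smul_mulVec, smul_smul, div_eq_inv_mul]
  have hscalar : exp (algebraMap 𝕂 (Matrix ι ι 𝕂) (s * μ)) = exp (s * μ) • 1 :=
    (algebraMap_exp_comm _).symm.trans (Algebra.algebraMap_eq_smul_one _)
  rw [hsplit, exp_add_of_commute _ _ (Algebra.commute_algebraMap_left _ _), hscalar,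
    smul_mul_assoc, one_mul, smul_mulVec, hnil]

theorem tendsto_exp_smul_mulVec_of_pow_mulVec_eq_zero (M : Matrix ι ι ℂ) {μ : ℂ} (hμ : μ.re < 0)
    {k : ℕ} {w : ι → ℂ} (hk : (M - μ • 1) ^ k *ᵥ w = 0) :
    Tendsto (fun t : ℝ => exp ((t : ℂ) • M) *ᵥ w) atTop (𝓝 0) := by
  simp_rw [exp_smul_mulVec_eq_sum_of_pow_mulVec_eq_zero M hk, ← Complex.exp_eq_exp_ℂ,
    Finset.smul_sum, smul_smul, ← mul_div_assoc]
  simpa using tendsto_finsetSum (Finset.range k) fun j _ =>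
    ((Complex.tendsto_exp_mul_mul_pow_atTop_nhds_zero hμ j).div_const (j.factorial : ℂ)).smul_const
      ((M - μ • 1) ^ j *ᵥ w)

theorem tendsto_exp_smul_mulVec_of_forall_spectrum_re_neg_s18 (M : Matrix ι ι ℂ)
    (hM : ∀ μ ∈ spectrum ℂ M, μ.re < 0) (v : ι → ℂ) :
    Tendsto (fun t : ℝ => exp ((t : ℂ) • M) *ᵥ v) atTop (𝓝 0) := by
  set T : Module.End ℂ (ι → ℂ) := toLinAlgEquiv' M
  have hv : v ∈ ⨆ μ, T.maxGenEigenspace μ := by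
    rw [Module.End.iSup_maxGenEigenspace_eq_top]
    trivial
  refine Submodule.iSup_induction _
    (motive := fun w => Tendsto (fun t : ℝ => exp ((t : ℂ) • M) *ᵥ w) atTop (𝓝 0)) hv ?_
    (by simp) fun w₁ w₂ h₁ h₂ => by simpa [mulVec_add] using h₁.add h₂
  intro μ w hw
  rcases eq_or_ne w 0 with rfl | hw0
  · simp
  obtain ⟨k, hk⟩ := (Module.End.mem_maxGenEigenspace T μ w).mp hw
  have hμ : T.HasEigenvalue μ :=
    Module.End.HasUnifEigenvalue.lt zero_lt_one ((Submodule.ne_bot_iff _).mpr ⟨w, hw, hw0⟩)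
  refine tendsto_exp_smul_mulVec_of_pow_mulVec_eq_zero M (k := k) (hM μ ?_) ?_
  · simpa only [T, AlgEquiv.spectrum_eq] using hμ.mem_spectrum
  · simpa only [T, ← toLinAlgEquiv'_apply, map_pow, map_sub, map_smul, map_one] using hk

end Matrix

theorem IsHurwitz.tendsto_zero_of_hasDerivAt {n : ℕ} {M : Matrix (Fin n) (Fin n) ℝ}
    (hM : IsHurwitz M) {f : ℝ → Fin n → ℝ} (hf : ∀ t, HasDerivAt f (M *ᵥ f t) t) :
    Tendsto f atTop (𝓝 0) := by
  set g : ℝ → Fin n → ℂ := fun t i => f t i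
  have hg : ∀ t, HasDerivAt g (M.map (algebraMap ℝ ℂ) *ᵥ g t) t := fun t =>
    hasDerivAt_pi.2 fun i =>
      ((hasDerivAt_pi.1 (hf t)) i).ofReal_comp.congr_deriv
        (RingHom.map_mulVec (algebraMap ℝ ℂ) M (f t) i)
  have hg_tendsto : Tendsto g atTop (𝓝 0) :=
    (tendsto_exp_smul_mulVec_of_forall_spectrum_re_neg_s18 _ hM (g 0)).congr fun t => by
      rw [eq_exp_smul_mulVec_of_hasDerivAt _ hg t, Complex.coe_smul]
  refine tendsto_pi_nhds.2 fun i => ?_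
  simpa [g, Function.comp_def] using
    (Complex.continuous_re.tendsto 0).comp ((continuous_apply i).tendsto 0 |>.comp hg_tendsto)

end MatrixExponential

section Consensus

open Finset

variable {ι κ ν : Type*} [Fintype κ]

theorem Finset.centerMass_sub {E : Type*} [AddCommGroup E] [Module ℝ E] (s : Finset ι)
    (w : ι → ℝ) (z₁ z₂ : ι → E) :
    s.centerMass w (fun i => z₁ i - z₂ i) = s.centerMass w z₁ - s.centerMass w z₂ := by
  simp only [centerMass, smul_sub, sum_sub_distrib]

theorem Finset.centerMass_sub_const {E : Type*} [AddCommGroup E] [Module ℝ E] {s : Finset ι}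
    {w : ι → ℝ} (hw : ∑ i ∈ s, w i ≠ 0) (z : ι → E) (c : E) :
    s.centerMass w (fun i => z i - c) = s.centerMass w z - c := by
  rw [centerMass_sub]
  exact congrArg _ (centerMass_const hw c)

theorem Matrix.mulVec_centerMass (M : Matrix ν κ ℝ) (s : Finset ι) (w : ι → ℝ) (z : ι → κ → ℝ) :
    M *ᵥ s.centerMass w z = s.centerMass w (fun i => M *ᵥ z i) := by
  simp only [centerMass, ← mulVecLin_apply, map_smul, map_sum]

theorem Matrix.mulVec_centerMass_mulVec_sub [Fintype ν] {s : Finset ι} {w : ι → ℝ}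
    (hw : ∑ i ∈ s, w i ≠ 0) (B : Matrix κ ν ℝ) (G : Matrix ν κ ℝ) (z : ι → κ → ℝ) (c : κ → ℝ) :
    B *ᵥ s.centerMass w (fun i => G *ᵥ (z i - c)) = (B * G) *ᵥ (s.centerMass w z - c) := by
  rw [← mulVec_centerMass, centerMass_sub_const hw, mulVec_mulVec]

theorem HasDerivAt.centerMass {E : Type*} [NormedAddCommGroup E] [NormedSpace ℝ E]
    {s : Finset ι} {w : ι → ℝ} {z : ι → ℝ → E} {z' : ι → E} {t : ℝ}
    (hz : ∀ i ∈ s, HasDerivAt (z i) (z' i) t) :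
    HasDerivAt (fun u => s.centerMass w (fun i => z i u)) (s.centerMass w z') t :=
  (HasDerivAt.fun_sum fun i hi => (hz i hi).const_smul (w i)).const_smul _

variable [Fintype ι]

theorem hasDerivAt_sub_centerMass {A K : Matrix κ κ ℝ} {w : ι → ℝ} (hw : ∑ i, w i ≠ 0)
    {x : ℝ → ι → κ → ℝ}
    (hx : ∀ i t, HasDerivAt (fun s => x s i)
      (A *ᵥ x t i - K *ᵥ (x t i - univ.centerMass w (x t))) t)
    (i : ι) (t : ℝ) :
    HasDerivAt (fun s => x s i - univ.centerMass w (x s))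
      ((A - K) *ᵥ (x t i - univ.centerMass w (x t))) t := by
  set c := univ.centerMass w (x t)
  have hc : HasDerivAt (fun s => univ.centerMass w (x s)) (A *ᵥ c) t := by
    refine (HasDerivAt.centerMass fun j _ => hx j t).congr_deriv ?_
    rw [centerMass_sub, ← mulVec_centerMass, ← mulVec_centerMass, centerMass_sub_const hw,
      sub_self, mulVec_zero, sub_zero]
  refine ((hx i t).sub hc).congr_deriv ?_
  rw [sub_mulVec, mulVec_sub A]
  abel

end Consensus

theorem asymptotic_output_consensus_state_feedback_general {n m p N : ℕ}
    (A : Matrix (Fin n) (Fin n) ℝ) (B : Matrix (Fin n) (Fin m) ℝ)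
    (C : Matrix (Fin p) (Fin n) ℝ)
    (P₀ : Matrix (Fin n) (Fin n) ℝ)
    (hhur : IsHurwitz (A - B * Bᵀ * P₀))
    (a : Fin N → ℝ) (ha : ∀ i, 0 < a i)
    (x : ℝ → Fin N → Fin n → ℝ)
    (hode : ∀ (i : Fin N) (t : ℝ),
      HasDerivAt (fun s => x s i)
        (A.mulVec (x t i) +
          B.mulVec ((∑ k, a k)⁻¹ •
            ∑ j, a j • (Bᵀ * P₀).mulVec (x t j - x t i))) t) :
    (∀ (i : Fin N) (t : ℝ),
      HasDerivAt (fun s => x s i - (∑ k, a k)⁻¹ • ∑ j, a j • x s j)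
        ((A - B * Bᵀ * P₀).mulVec (x t i - (∑ k, a k)⁻¹ • ∑ j, a j • x t j)) t) ∧
    (∀ i : Fin N,
      Tendsto (fun t => x t i - (∑ k, a k)⁻¹ • ∑ j, a j • x t j) atTop (nhds 0)) ∧
    (∀ i j : Fin N,
      Tendsto (fun t => C.mulVec (x t i) - C.mulVec (x t j)) atTop (nhds 0)) := by
  -- `(∑ k, a k)⁻¹ • ∑ j, a j • z j` is literally `Finset.univ.centerMass a z`.
  have hdev : ∀ (i : Fin N) (t : ℝ),
      HasDerivAt (fun s => x s i - Finset.univ.centerMass a (x s))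
        ((A - B * Bᵀ * P₀) *ᵥ (x t i - Finset.univ.centerMass a (x t))) t := fun i => by
    have hsum : ∑ k, a k ≠ 0 := (Finset.sum_pos (fun k _ => ha k) ⟨i, Finset.mem_univ i⟩).ne'
    refine hasDerivAt_sub_centerMass hsum (fun j t => (hode j t).congr_deriv ?_) i
    rw [← Finset.centerMass, mulVec_centerMass_mulVec_sub hsum, ← Matrix.mul_assoc, ← neg_sub,
      mulVec_neg, ← sub_eq_add_neg]
  have hlim : ∀ i : Fin N,
      Tendsto (fun t => x t i - Finset.univ.centerMass a (x t)) atTop (nhds 0) :=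
    fun i => hhur.tendsto_zero_of_hasDerivAt (hdev i)
  refine ⟨hdev, hlim, fun i j => ?_⟩
  have hCcont : Tendsto (C *ᵥ ·) (nhds 0) (nhds 0) :=
    C.mulVecLin.continuous_of_finiteDimensional.tendsto' 0 0 (mulVec_zero C)
  have hdiff := (hlim i).sub (hlim j)
  rw [sub_zero] at hdiff
  refine (hCcont.comp hdiff).congr fun t => ?_
  simp only [Function.comp_apply, sub_sub_sub_cancel_right, mulVec_sub]

/-- Under the static state feedback
`uᵢ = (∑_k a_k)⁻¹ ∑_j a_j Bᵀ P₀ (x_j − x_i)` (i.e. `u = −(L(a) ⊗ Bᵀ P₀) x`), the deviations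
`δᵢ = xᵢ − (∑_k a_k)⁻¹ ∑_j a_j x_j` satisfy `δ̇ᵢ = (A − B Bᵀ P₀) δᵢ`, converge to `0`, and the
agents reach asymptotic output consensus. -/
theorem asymptotic_output_consensus_state_feedback {n m p N : ℕ}
    (A : Matrix (Fin n) (Fin n) ℝ) (B : Matrix (Fin n) (Fin m) ℝ)
    (C : Matrix (Fin p) (Fin n) ℝ) (hC : C.rank = p)
    (P₀ : Matrix (Fin n) (Fin n) ℝ) (hP : P₀.PosSemidef)
    (hare : Aᵀ * P₀ + P₀ * A = P₀ * B * Bᵀ * P₀)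
    (hhur : IsHurwitz (A - B * Bᵀ * P₀))
    (a : Fin N → ℝ) (ha : ∀ i, 0 < a i)
    (x : ℝ → Fin N → Fin n → ℝ)
    (hode : ∀ (i : Fin N) (t : ℝ),
      HasDerivAt (fun s => x s i)
        (A.mulVec (x t i) +
          B.mulVec ((∑ k, a k)⁻¹ •
            ∑ j, a j • (Bᵀ * P₀).mulVec (x t j - x t i))) t) :
    (∀ (i : Fin N) (t : ℝ),
      HasDerivAt (fun s => x s i - (∑ k, a k)⁻¹ • ∑ j, a j • x s j)
        ((A - B * Bᵀ * P₀).mulVec (x t i - (∑ k, a k)⁻¹ • ∑ j, a j • x t j)) t) ∧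
    (∀ i : Fin N,
      Tendsto (fun t => x t i - (∑ k, a k)⁻¹ • ∑ j, a j • x t j) atTop (nhds 0)) ∧
    (∀ i j : Fin N,
      Tendsto (fun t => C.mulVec (x t i) - C.mulVec (x t j)) atTop (nhds 0)) :=
  asymptotic_output_consensus_state_feedback_general A B C P₀ hhur a ha x hode
end

section
/- Let P_0 ∈ ℝ^{n×n} be symmetric positive semidefinite with A^T P_0 + P_0 A = P_0 B B^T P_0 and A − B B^T P_0 Hurwitz, and let Q ∈ ℝ^{n×n} be such that A + Q C^T C is Hurwitz. Consider N agents ẋ_i = A x_i + B u_i, y_i = C x_i, with observer-based output feedback u_i = −B^T P_0 δ̂_i, where each observer state δ̂_i ∈ ℝ^n evolves according to δ̂̇_i = (A − B B^T P_0) δ̂_i − Q C^T ( (Σ_{k=1}^N a_k)^{-1} Σ_{j=1}^N a_j (y_i − y_j) − C δ̂_i ). Then for all initial conditions x_i(0) and δ̂_i(0), the system reaches asymptotic output consensus: y_i(t) − y_j(t) → 0 as t → ∞ for all i, j. -/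
open Matrix MeasureTheory Filter

/-! With `K = B Bᵀ P₀` and `R = Q Cᵀ C`, the observer is driven by `C` applied to the deviation
`δᵢ` of `xᵢ` from the `a`-weighted average of the agents. In the coordinates `δᵢ` and
`ηᵢ = δᵢ - (deviation of δ̂)ᵢ` the closed loop is block triangular,
`δᵢ' = (A - K) δᵢ + K ηᵢ`, `ηᵢ' = (A + R) ηᵢ`, with Hurwitz diagonal blocks. Solutions of
`z' = M z` are `exp (t M) z 0`, and for Hurwitz `M` the eigenvalues of `exp M` lie in the open
unit disc, so `exp (k M) = (exp M)ᵏ → 0` by Gelfand's formula and hence `exp (t M) → 0`.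
Thus every `δᵢ → 0`, and `yᵢ - yⱼ = C (δᵢ - δⱼ) → 0`. -/

open NormedSpace Polynomial Topology

theorem tendsto_pow_atTop_nhds_zero_of_forall_spectrum_norm_lt_one {A : Type*} [NormedRing A]
    [NormedAlgebra ℂ A] [CompleteSpace A] {a : A} (ha : ∀ z ∈ spectrum ℂ a, ‖z‖ < 1) :
    Tendsto (fun k : ℕ => a ^ k) atTop (𝓝 0) := by
  cases subsingleton_or_nontrivial A
  · simp [Subsingleton.elim _ (0 : A)]
  have hρ : spectralRadius ℂ a < 1 :=
    spectrum.spectralRadius_lt_of_forall_lt a fun z hz => by exact_mod_cast ha z hz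
  obtain ⟨r, hρr, hr1⟩ := ENNReal.lt_iff_exists_nnreal_btwn.mp hρ
  have hroot : ∀ᶠ k : ℕ in atTop, (‖a ^ k‖₊ : ENNReal) ^ (1 / (k : ℝ)) < r :=
    (spectrum.pow_nnnorm_pow_one_div_tendsto_nhds_spectralRadius a).eventually_lt_const hρr
  have hgeom : ∀ᶠ k : ℕ in atTop, ‖a ^ k‖ ≤ (r : ℝ) ^ k := by
    filter_upwards [hroot, eventually_ne_atTop 0] with k hk hk0
    have := ENNReal.rpow_le_rpow hk.le (Nat.cast_nonneg k : (0 : ℝ) ≤ k)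
    rw [← ENNReal.rpow_mul, one_div_mul_cancel (Nat.cast_ne_zero.mpr hk0), ENNReal.rpow_one,
      ENNReal.rpow_natCast, ← ENNReal.coe_pow, ENNReal.coe_le_coe] at this
    exact_mod_cast this
  exact squeeze_zero_norm' hgeom (tendsto_pow_atTop_nhds_zero_of_lt_one r.2 (mod_cast hr1))

theorem tendsto_exp_smul_atTop_nhds_zero_of_tendsto_pow {𝔸 : Type*} [NormedRing 𝔸]
    [NormedAlgebra ℝ 𝔸] [CompleteSpace 𝔸] {a : 𝔸}
    (ha : Tendsto (fun k : ℕ => exp a ^ k) atTop (𝓝 0)) :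
    Tendsto (fun t : ℝ => exp (t • a)) atTop (𝓝 0) := by
  let +nondep : NormedAlgebra ℚ 𝔸 := .restrictScalars ℚ ℝ 𝔸
  have hcont : Continuous fun s : ℝ => exp (s • a) :=
    continuous_iff_continuousAt.mpr fun s => (hasDerivAt_exp_smul_const a s).continuousAt
  obtain ⟨C, hC⟩ := (isCompact_Icc (a := (0 : ℝ)) (b := 1)).exists_bound_of_continuousOn
    hcont.continuousOn
  have hfract : IsBoundedUnder (· ≤ ·) atTop (fun t : ℝ => ‖exp ((t - ⌊t⌋₊) • a)‖) := by
    refine isBoundedUnder_of_eventually_le (a := C) ?_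
    filter_upwards [eventually_ge_atTop 0] with t ht
    exact hC _ ⟨sub_nonneg.mpr (Nat.floor_le ht), by linarith [Nat.lt_floor_add_one t]⟩
  -- `exp (t • a) = exp ((t - ⌊t⌋₊) • a) * exp a ^ ⌊t⌋₊`, whose first factor stays bounded
  refine (isBoundedUnder_le_mul_tendsto_zero hfract
    (ha.comp (tendsto_nat_floor_atTop (α := ℝ)))).congr fun t => ?_
  rw [Function.comp_apply, ← NormedSpace.exp_nsmul, ← Nat.cast_smul_eq_nsmul ℝ,
    ← NormedSpace.exp_add_of_commute ((Commute.refl a).smul_left _ |>.smul_right _), ← add_smul,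
    sub_add_cancel]

section MatrixExp

attribute [local instance] Matrix.linftyOpNormedRing Matrix.linftyOpNormedAlgebra

variable {ι : Type*} [Fintype ι] [DecidableEq ι]

theorem Matrix.exp_mulVec_of_mulVec_eq_smul {M : Matrix ι ι ℂ} {μ : ℂ} {v : ι → ℂ}
    (hv : M *ᵥ v = μ • v) : exp M *ᵥ v = Complex.exp μ • v := by
  have hpow : ∀ k : ℕ, M ^ k *ᵥ v = μ ^ k • v := by
    intro k
    induction k with
    | zero => simp
    | succ k ih => rw [pow_succ, ← mulVec_mulVec, hv, mulVec_smul, ih, smul_smul, pow_succ']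
  let evalAt : Matrix ι ι ℂ →L[ℂ] ι → ℂ := ((mulVecBilin ℂ ℂ).flip v).toContinuousLinearMap
  have hseries := (exp_series_hasSum_exp' (𝕂 := ℂ) M).mapL evalAt
  simp only [evalAt, LinearMap.coe_toContinuousLinearMap', LinearMap.flip_apply,
    mulVecBilin_apply, smul_mulVec, hpow, smul_smul] at hseries
  rw [Complex.exp_eq_exp_ℂ]
  exact hseries.unique ((exp_series_hasSum_exp' (𝕂 := ℂ) μ).smul_const v)

/-- `exp M` lies in the (closed, finite-dimensional) subalgebra generated by `M`, so it is a
polynomial `q` in `M`; its eigenvalues are the `q μ`, and an eigenvector shows `q μ = exp μ`. -/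
theorem Matrix.spectrum_exp_subset (M : Matrix ι ι ℂ) :
    spectrum ℂ (exp M) ⊆ Complex.exp '' spectrum ℂ M := by
  cases isEmpty_or_nonempty ι
  · simp [spectrum.of_subsingleton]
  obtain ⟨q, hq⟩ : ∃ q : ℂ[X], aeval M q = exp M := by
    rw [← Set.mem_range, ← AlgHom.coe_range, ← Algebra.adjoin_singleton_eq_range_aeval]
    exact exp_mem (R := ℂ) (s := Algebra.adjoin ℂ {M})
      (Subalgebra.toSubmodule (Algebra.adjoin ℂ {M})).closed_of_finiteDimensional
      (Algebra.self_mem_adjoin_singleton ℂ M)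
  rw [← hq, spectrum.map_polynomial_aeval]
  rintro _ ⟨μ, hμ, rfl⟩
  have hev : Module.End.HasEigenvalue (toLin' M) μ :=
    Module.End.hasEigenvalue_iff_mem_spectrum.mpr (by rwa [spectrum_toLin'])
  obtain ⟨v, hv⟩ := hev.exists_hasEigenvector
  have hMv : M *ᵥ v = μ • v := by simpa using hv.apply_eq_smul
  have hqv : aeval M q *ᵥ v = q.eval μ • v := by
    simpa [show toLin' M = toLinAlgEquiv' M from rfl, aeval_algEquiv] using
      Module.End.aeval_apply_of_hasEigenvector (p := q) hv
  refine ⟨μ, hμ, smul_left_injective ℂ hv.2 ?_⟩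
  simp only [← exp_mulVec_of_mulVec_eq_smul hMv, ← hqv, hq]

theorem Matrix.exp_map_algebraMap (M : Matrix ι ι ℝ) :
    exp (M.map (algebraMap ℝ ℂ)) = (exp M).map (algebraMap ℝ ℂ) :=
  (map_exp (algebraMap ℝ ℂ).mapMatrix
    (continuous_id.matrix_map (continuous_algebraMap ℝ ℂ)) M).symm

theorem Matrix.tendsto_exp_smul_atTop_nhds_zero {M : Matrix ι ι ℝ}
    (hM : ∀ μ ∈ spectrum ℂ (M.map (algebraMap ℝ ℂ)), μ.re < 0) :
    Tendsto (fun t : ℝ => exp (t • M)) atTop (𝓝 0) := by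
  have hpow : Tendsto (fun k : ℕ => exp (M.map (algebraMap ℝ ℂ)) ^ k) atTop (𝓝 0) := by
    refine tendsto_pow_atTop_nhds_zero_of_forall_spectrum_norm_lt_one fun z hz => ?_
    obtain ⟨μ, hμ, rfl⟩ := spectrum_exp_subset _ hz
    rw [Complex.norm_exp, Real.exp_lt_one_iff]
    exact hM μ hμ
  have hre : Continuous fun X : Matrix ι ι ℂ => X.map Complex.re :=
    continuous_id.matrix_map Complex.continuous_re
  convert (hre.tendsto 0).comp (tendsto_exp_smul_atTop_nhds_zero_of_tendsto_pow hpow) using 1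
  · ext t : 1
    have hsmul : t • M.map (algebraMap ℝ ℂ) = (t • M).map (algebraMap ℝ ℂ) := by
      ext i j
      simp [Complex.real_smul]
    have hre_ofReal : (exp (t • M)).map (Complex.re ∘ algebraMap ℝ ℂ) = exp (t • M) := by
      ext i j
      simp
    rw [Function.comp_apply, hsmul]
    exact (congrArg (Matrix.map · Complex.re) (exp_map_algebraMap (t • M))).trans
      ((Matrix.map_map ..).trans hre_ofReal) |>.symm
  · simp

theorem Matrix.eq_exp_smul_mulVec_of_hasDerivAt_s19 {M : Matrix ι ι ℝ} {z : ℝ → ι → ℝ}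
    (hz : ∀ t, HasDerivAt z (M *ᵥ z t) t) (t : ℝ) : z t = exp (t • M) *ᵥ z 0 := by
  let evalAt : Matrix ι ι ℝ →L[ℝ] ι → ℝ := ((mulVecBilin ℝ ℝ).flip (z 0)).toContinuousLinearMap
  have hexp : ∀ t, HasDerivAt (fun s : ℝ => exp (s • M) *ᵥ z 0) (M *ᵥ (exp (t • M) *ᵥ z 0)) t := by
    intro t
    rw [mulVec_mulVec]
    exact evalAt.hasFDerivAt.comp_hasDerivAt t (hasDerivAt_exp_smul_const' M t)
  let f : (ι → ℝ) →L[ℝ] ι → ℝ := (mulVecLin M).toContinuousLinearMap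
  exact congrFun (ODE_solution_unique_univ (v := fun _ => f) (s := fun _ => Set.univ)
    (fun _ => f.lipschitz.lipschitzOnWith) (fun t => ⟨hz t, trivial⟩)
    (fun t => ⟨hexp t, trivial⟩) (t₀ := 0) (by simp)) t

theorem Matrix.tendsto_atTop_nhds_zero_of_hasDerivAt_mulVec {M : Matrix ι ι ℝ}
    (hM : ∀ μ ∈ spectrum ℂ (M.map (algebraMap ℝ ℂ)), μ.re < 0) {z : ℝ → ι → ℝ}
    (hz : ∀ t, HasDerivAt z (M *ᵥ z t) t) :
    Tendsto z atTop (𝓝 0) := by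
  have h := ((continuous_id.matrix_mulVec (continuous_const (y := z 0))).tendsto 0).comp
    (tendsto_exp_smul_atTop_nhds_zero hM)
  simp only [Function.comp_def, id, zero_mulVec] at h
  exact h.congr fun t => (eq_exp_smul_mulVec_of_hasDerivAt_s19 hz t).symm

end MatrixExp

theorem Matrix.spectrum_fromBlocks_zero₂₁ {K m n : Type*} [Field K] [Fintype m] [DecidableEq m]
    [Fintype n] [DecidableEq n] (A : Matrix m m K) (B : Matrix m n K) (D : Matrix n n K) :
    spectrum K (fromBlocks A B 0 D) = spectrum K A ∪ spectrum K D := by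
  ext μ
  simp [mem_spectrum_iff_isRoot_charpoly, charpoly_fromBlocks_zero₂₁]

section Deviation

variable {ι 𝕜 E F : Type*} [Fintype ι] [Field 𝕜] [AddCommGroup E] [Module 𝕜 E]
  [AddCommGroup F] [Module 𝕜 F]

def deviation (a : ι → 𝕜) (v : ι → E) : ι → E :=
  fun k => v k - (∑ j, a j)⁻¹ • ∑ j, a j • v j

theorem deviation_sub (a : ι → 𝕜) (v w : ι → E) :
    deviation a (v - w) = deviation a v - deviation a w := by
  ext1 k
  simp only [deviation, Pi.sub_apply, smul_sub, Finset.sum_sub_distrib]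
  abel

theorem deviation_map (a : ι → 𝕜) (f : E →ₗ[𝕜] F) (v : ι → E) :
    deviation a (fun k => f (v k)) = fun k => f (deviation a v k) := by
  ext1 k
  simp [deviation, map_sum]

theorem sum_smul_deviation {a : ι → 𝕜} (ha : ∑ j, a j ≠ 0) (v : ι → E) :
    ∑ k, a k • deviation a v k = 0 := by
  simp only [deviation, smul_sub, Finset.sum_sub_distrib, ← Finset.sum_smul, smul_smul,
    ← Finset.sum_mul, mul_inv_cancel₀ ha, one_smul, sub_self]

theorem deviation_deviation {a : ι → 𝕜} (ha : ∑ j, a j ≠ 0) (v : ι → E) :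
    deviation a (deviation a v) = deviation a v := by
  ext1 k
  rw [deviation, sum_smul_deviation ha, smul_zero, sub_zero]

theorem inv_sum_smul_sum_smul_sub_eq_deviation {a : ι → 𝕜} (ha : ∑ j, a j ≠ 0) (v : ι → E)
    (k : ι) :
    (∑ j, a j)⁻¹ • ∑ j, a j • (v k - v j) = deviation a v k := by
  simp only [deviation, smul_sub, Finset.sum_sub_distrib, ← Finset.sum_smul, smul_smul,
    inv_mul_cancel₀ ha, one_smul]

end Deviation

theorem HasDerivAt.deviation {ι 𝕜 E : Type*} [Fintype ι] [NontriviallyNormedField 𝕜]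
    [NormedAddCommGroup E] [NormedSpace 𝕜 E] (a : ι → 𝕜) {v : 𝕜 → ι → E} {v' : ι → E} {t : 𝕜}
    (hv : ∀ k, HasDerivAt (fun s => v s k) (v' k) t) (k : ι) :
    HasDerivAt (fun s => deviation a (v s) k) (deviation a v' k) t :=
  (hv k).sub ((HasDerivAt.fun_sum fun j _ => (hv j).const_smul (a j)).const_smul _)

theorem HasDerivAt.sumElim {m n 𝕜 E : Type*} [Fintype m] [Fintype n] [NontriviallyNormedField 𝕜]
    [NormedAddCommGroup E] [NormedSpace 𝕜 E] {f : 𝕜 → m → E} {g : 𝕜 → n → E} {f' : m → E}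
    {g' : n → E} {t : 𝕜}
    (hf : HasDerivAt f f' t) (hg : HasDerivAt g g' t) :
    HasDerivAt (fun s => Sum.elim (f s) (g s)) (Sum.elim f' g') t := by
  refine hasDerivAt_pi.mpr ?_
  rintro (c | c)
  exacts [hasDerivAt_pi.mp hf c, hasDerivAt_pi.mp hg c]

section ObserverErrorDynamics

variable {ι n : Type*} [Fintype ι] [Fintype n] {A K R : Matrix n n ℝ}
  {a : ι → ℝ} {x δhat : ℝ → ι → n → ℝ}

/-- The separation principle: in the coordinates `deviation a x` and
`deviation a x - deviation a δhat` the closed loop is block triangular. -/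
theorem hasDerivAt_deviation_observerError (ha : ∑ j, a j ≠ 0)
    (hx : ∀ k t, HasDerivAt (fun s => x s k) (A *ᵥ x t k - K *ᵥ δhat t k) t)
    (hδhat : ∀ k t, HasDerivAt (fun s => δhat s k)
      ((A - K) *ᵥ δhat t k - R *ᵥ (deviation a (x t) k - δhat t k)) t) (k : ι) (t : ℝ) :
    HasDerivAt
      (fun s => Sum.elim (deviation a (x s) k) (deviation a (x s) k - deviation a (δhat s) k))
      (fromBlocks (A - K) K 0 (A + R) *ᵥ
        Sum.elim (deviation a (x t) k) (deviation a (x t) k - deviation a (δhat t) k)) t := by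
  have hdx := HasDerivAt.deviation a (hx · t) k
  have hdδhat := HasDerivAt.deviation a (hδhat · t) k
  have hmap (M : Matrix n n ℝ) (v : ι → n → ℝ) :
      deviation a (fun k => M *ᵥ v k) k = M *ᵥ deviation a v k :=
    congrFun (deviation_map a (mulVecLin M) v) k
  have hsub (v w : ι → n → ℝ) :
      deviation a (fun k => v k - w k) k = deviation a v k - deviation a w k :=
    congrFun (deviation_sub a v w) k
  rw [hsub, hmap, hmap] at hdx
  rw [hsub, hmap, hmap, hsub, deviation_deviation ha] at hdδhat
  rw [fromBlocks_mulVec]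
  refine (hdx.sumElim (hdx.sub hdδhat)).congr_deriv ?_
  congr 1 <;> simp only [Sum.elim_comp_inl, Sum.elim_comp_inr, sub_mulVec, add_mulVec,
    mulVec_sub, zero_mulVec] <;> abel

theorem tendsto_deviation_of_observer [DecidableEq n] (ha : ∑ j, a j ≠ 0)
    (hAK : ∀ μ ∈ spectrum ℂ ((A - K).map (algebraMap ℝ ℂ)), μ.re < 0)
    (hAR : ∀ μ ∈ spectrum ℂ ((A + R).map (algebraMap ℝ ℂ)), μ.re < 0)
    (hx : ∀ k t, HasDerivAt (fun s => x s k) (A *ᵥ x t k - K *ᵥ δhat t k) t)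
    (hδhat : ∀ k t, HasDerivAt (fun s => δhat s k)
      ((A - K) *ᵥ δhat t k - R *ᵥ (deviation a (x t) k - δhat t k)) t) (k : ι) :
    Tendsto (fun t => deviation a (x t) k) atTop (𝓝 0) := by
  have hblock : ∀ μ ∈ spectrum ℂ ((fromBlocks (A - K) K 0 (A + R)).map (algebraMap ℝ ℂ)),
      μ.re < 0 := by
    rw [fromBlocks_map, Matrix.map_zero _ (map_zero _), spectrum_fromBlocks_zero₂₁]
    rintro μ (hμ | hμ)
    exacts [hAK μ hμ, hAR μ hμ]
  have h := tendsto_atTop_nhds_zero_of_hasDerivAt_mulVec hblock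
    (hasDerivAt_deviation_observerError ha hx hδhat k)
  exact tendsto_pi_nhds.mpr fun c => by simpa using tendsto_pi_nhds.mp h (Sum.inl c)

end ObserverErrorDynamics

theorem asymptotic_output_consensus_observer_feedback_general {n m p N : ℕ}
    (A : Matrix (Fin n) (Fin n) ℝ) (B : Matrix (Fin n) (Fin m) ℝ)
    (C : Matrix (Fin p) (Fin n) ℝ)
    (P₀ : Matrix (Fin n) (Fin n) ℝ)
    (hhur : IsHurwitz (A - B * Bᵀ * P₀))
    (Q : Matrix (Fin n) (Fin n) ℝ) (hQ : IsHurwitz (A + Q * Cᵀ * C))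
    (a : Fin N → ℝ) (ha : ∀ i, 0 < a i)
    (x : ℝ → Fin N → Fin n → ℝ) (δhat : ℝ → Fin N → Fin n → ℝ)
    (hodex : ∀ (i : Fin N) (t : ℝ),
      HasDerivAt (fun s => x s i)
        (A.mulVec (x t i) + B.mulVec (-(Bᵀ * P₀).mulVec (δhat t i))) t)
    (hodeδ : ∀ (i : Fin N) (t : ℝ),
      HasDerivAt (fun s => δhat s i)
        ((A - B * Bᵀ * P₀).mulVec (δhat t i) -
          (Q * Cᵀ).mulVec
            ((∑ k, a k)⁻¹ • (∑ j, a j • (C.mulVec (x t i) - C.mulVec (x t j))) -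
              C.mulVec (δhat t i))) t) :
    ∀ i j : Fin N,
      Tendsto (fun t => C.mulVec (x t i) - C.mulVec (x t j)) atTop (nhds 0) := by
  intro i j
  have hsum : ∑ k, a k ≠ 0 := (Finset.sum_pos (fun k _ => ha k) ⟨i, Finset.mem_univ i⟩).ne'
  have hx : ∀ k t, HasDerivAt (fun s => x s k) (A *ᵥ x t k - (B * Bᵀ * P₀) *ᵥ δhat t k) t := by
    intro k t
    convert hodex k t using 1
    rw [mulVec_neg, mulVec_mulVec, Matrix.mul_assoc, sub_eq_add_neg]
  have hδhat : ∀ k t, HasDerivAt (fun s => δhat s k) ((A - B * Bᵀ * P₀) *ᵥ δhat t k -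
      (Q * Cᵀ * C) *ᵥ (deviation a (x t) k - δhat t k)) t := by
    intro k t
    have hy : deviation a (fun j => C *ᵥ x t j) k = C *ᵥ deviation a (x t) k :=
      congrFun (deviation_map a (mulVecLin C) (x t)) k
    rw [← mulVec_mulVec, mulVec_sub, ← hy, ← inv_sum_smul_sum_smul_sub_eq_deviation hsum]
    exact hodeδ k t
  have hdev := tendsto_deviation_of_observer hsum hhur hQ hx hδhat
  have hdiff : Tendsto (fun t => deviation a (x t) i - deviation a (x t) j) atTop (𝓝 0) := by
    simpa using (hdev i).sub (hdev j)
  simpa [Function.comp_def, deviation, mulVec_sub] using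
    (((continuous_const (y := C)).matrix_mulVec continuous_id).tendsto 0).comp hdiff

/-- With `P₀` symmetric positive semidefinite solving
`Aᵀ P₀ + P₀ A = P₀ B Bᵀ P₀`, `A − B Bᵀ P₀` Hurwitz, and `Q` such that `A + Q Cᵀ C` is Hurwitz,
the observer-based output feedback `uᵢ = −Bᵀ P₀ δ̂ᵢ`, where
`δ̂̇ᵢ = (A − B Bᵀ P₀) δ̂ᵢ − Q Cᵀ ((∑_k a_k)⁻¹ ∑_j a_j (yᵢ − y_j) − C δ̂ᵢ)`, drives the system
to asymptotic output consensus from every initial condition. -/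
theorem asymptotic_output_consensus_observer_feedback {n m p N : ℕ}
    (A : Matrix (Fin n) (Fin n) ℝ) (B : Matrix (Fin n) (Fin m) ℝ)
    (C : Matrix (Fin p) (Fin n) ℝ) (hC : C.rank = p)
    (P₀ : Matrix (Fin n) (Fin n) ℝ) (hP : P₀.PosSemidef)
    (hare : Aᵀ * P₀ + P₀ * A = P₀ * B * Bᵀ * P₀)
    (hhur : IsHurwitz (A - B * Bᵀ * P₀))
    (Q : Matrix (Fin n) (Fin n) ℝ) (hQ : IsHurwitz (A + Q * Cᵀ * C))
    (a : Fin N → ℝ) (ha : ∀ i, 0 < a i)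
    (x : ℝ → Fin N → Fin n → ℝ) (δhat : ℝ → Fin N → Fin n → ℝ)
    (hodex : ∀ (i : Fin N) (t : ℝ),
      HasDerivAt (fun s => x s i)
        (A.mulVec (x t i) + B.mulVec (-(Bᵀ * P₀).mulVec (δhat t i))) t)
    (hodeδ : ∀ (i : Fin N) (t : ℝ),
      HasDerivAt (fun s => δhat s i)
        ((A - B * Bᵀ * P₀).mulVec (δhat t i) -
          (Q * Cᵀ).mulVec
            ((∑ k, a k)⁻¹ • (∑ j, a j • (C.mulVec (x t i) - C.mulVec (x t j))) -
              C.mulVec (δhat t i))) t) :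
    ∀ i j : Fin N,
      Tendsto (fun t => C.mulVec (x t i) - C.mulVec (x t j)) atTop (nhds 0) :=
  asymptotic_output_consensus_observer_feedback_general A B C P₀ hhur Q hQ a ha x δhat hodex hodeδ
end
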